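/- arXiv:2012.04202 — 10 statements merged into one kernel-verified Lean document; each statement's English description precedes it below -/
import Mathlib

section
/- For a prime p and natural numbers a and b, the p-adic valuation of the binomial coefficient C(a+b, b) equals the number of carries when a and b are added in base p. -/
/-- The number of carries when `a` and `b` are added in base `p`:
a carry occurs out of position `i` iff `a % p^(i+1) + b % p^(i+1) ≥ p^(i+1)`. -/
def numCarries (p a b : ℕ) : ℕ :=
  ((Finset.range (a + b + 1)).filter (fun i => p ^ (i + 1) ≤ a % p ^ (i + 1) + b % p ^ (i + 1))).card

/-- **Kummer's theorem**: the `p`-adic valuation of `C(a+b, b)` equals the number of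
carries when `a` and `b` are added in base `p`. -/
theorem kummer (p a b : ℕ) (hp : p.Prime) :
    padicValNat p ((a + b).choose b) = numCarries p a b := by
  haveI : Fact p.Prime := ⟨hp⟩
  have hlog : Nat.log p (a + b) < a + b + 2 :=
    lt_of_le_of_lt (Nat.log_le_self p (a + b)) (by omega)
  rw [padicValNat_choose' hlog, numCarries]
  apply Finset.card_nbij' (fun i => i - 1) (fun i => i + 1)
  · intro i hi
    simp only [Finset.mem_coe, Finset.mem_filter, Finset.mem_Ico, Finset.mem_range] at hi ⊢
    obtain ⟨⟨h1, h2⟩, h3⟩ := hi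
    have heq : i - 1 + 1 = i := by omega
    rw [heq]
    exact ⟨by omega, by omega⟩
  · intro i hi
    simp only [Finset.mem_coe, Finset.mem_filter, Finset.mem_Ico, Finset.mem_range] at hi ⊢
    exact ⟨⟨by omega, by omega⟩, by omega⟩
  · intro i hi
    simp only [Finset.mem_coe, Finset.mem_filter, Finset.mem_Ico] at hi
    beta_reduce
    omega
  · intro i hi
    beta_reduce
    omega
end

section
/- Let i ≤ b ≤ v be natural numbers and let A_i^b(v) denote the inclusion matrix over a field of characteristic zero, whose rows are indexed by i-subsets and columns by b-subsets of {1,...,v}, with entry 1 in position (X,Y) if X ⊆ Y and 0 otherwise. Then A_i^b(v) has full rank. -/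
/-!
Write `W_{a,b}` for the inclusion matrix of `a`-sets versus `b`-sets of an `n`-set. Entry counts
give `W_{a,b} W_{b,c} = C(c-a, b-a) W_{a,c}` and the up/down commutation relation
`W_{k+1,b+1} W_{b,b+1}ᵀ = W_{k,k+1}ᵀ W_{k,b} + (n-k-b-1) W_{k+1,b}`.

If `k + b ≤ n` the rows of `W_{k,b}` are independent. Given `f W_{k+1,b+1} = 0`, the commutation
relation gives `g W_{k,b} = -(n-k-b-1) f W_{k+1,b}` for `g = f W_{k,k+1}ᵀ`. Multiplying by
`W_{b,b+1}` turns the right-hand side into a multiple of `f W_{k+1,b+1} = 0`, so `g W_{k,b+1} = 0`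
and `g = 0` by induction on `k`. Then `f W_{k+1,b} = 0`, and `f = 0` by induction on `b`.
Complementation identifies `W_{i,b}` with the transpose of `W_{n-b,n-i}`, which handles
`i + b ≥ n`.
-/

/-- The inclusion matrix over `ℚ`: rows indexed by `i`-subsets, columns by `b`-subsets
of `{1,…,v}`, with entry `1` when the row set is contained in the column set. -/
def inclusionMatrixQ (v i b : ℕ) :
    Matrix {X : Finset (Fin v) // X.card = i} {Y : Finset (Fin v) // Y.card = b} ℚ :=
  fun X Y => if (X : Finset (Fin v)) ⊆ (Y : Finset (Fin v)) then 1 else 0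

open Finset Matrix

variable {α K : Type*}

lemma sum_subtype_card_eq_boole [Fintype α] [AddCommMonoidWithOne K] (b : ℕ)
    (p : Finset α → Prop) [DecidablePred p] :
    ∑ Y : {Y : Finset α // #Y = b}, (if p Y then (1 : K) else 0) =
      #{Y ∈ powersetCard b univ | p Y} := by
  rw [← sum_boole]
  exact (sum_subtype _ (fun _ => mem_powersetCard_univ) fun Y => if p Y then (1 : K) else 0).symm

variable [DecidableEq α]

variable (α K) in
def inclusionMatrix [Zero K] [One K] (a b : ℕ) :
    Matrix {X : Finset α // #X = a} {Y : Finset α // #Y = b} K :=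
  of fun X Y => if (X : Finset α) ⊆ Y then 1 else 0

@[simp]
lemma inclusionMatrix_apply [Zero K] [One K] {a b : ℕ} (X : {X : Finset α // #X = a})
    (Y : {Y : Finset α // #Y = b}) :
    inclusionMatrix α K a b X Y = if (X : Finset α) ⊆ Y then 1 else 0 := rfl

lemma inclusionMatrix_self [Zero K] [One K] (a : ℕ) : inclusionMatrix α K a a = 1 := by
  ext X Y
  rw [inclusionMatrix_apply, one_apply]
  by_cases h : X = Y
  · rw [if_pos h, if_pos (h ▸ Subset.rfl)]
  · rw [if_neg h,
      if_neg fun hXY => h (Subtype.ext (eq_of_subset_of_card_le hXY (by rw [X.2, Y.2])))]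

variable [Fintype α]

lemma inclusionMatrix_mul_inclusionMatrix [CommSemiring K] {a b c : ℕ} (hab : a ≤ b) :
    inclusionMatrix α K a b * inclusionMatrix α K b c =
      ((c - a).choose (b - a) : K) • inclusionMatrix α K a c := by
  ext ⟨X, hX⟩ ⟨Z, hZ⟩
  simp only [mul_apply, inclusionMatrix_apply, ite_zero_mul_ite_zero, mul_one, Matrix.smul_apply,
    smul_eq_mul]
  rw [sum_subtype_card_eq_boole b fun Y => X ⊆ Y ∧ Y ⊆ Z, mul_ite, mul_one, mul_zero]
  split_ifs with hXZ
  · have hfilter : ({Y ∈ powersetCard b univ | X ⊆ Y ∧ Y ⊆ Z} : Finset (Finset α)) =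
        {Y ∈ powersetCard b Z | X ⊆ Y} := by
      ext Y
      simp only [mem_filter, mem_powersetCard, subset_univ, true_and]
      tauto
    rw [hfilter, card_filter_powersetCard_subset _ _ _ hXZ (hX.trans_le hab), hX, hZ]
  · rw [filter_eq_empty_iff.mpr fun Y _ h => hXZ (h.1.trans h.2), card_empty, Nat.cast_zero]

/- Entrywise at `(X, Z)`: the left side counts `(b+1)`-sets containing `X ∪ Z`, the first term on
the right `k`-sets inside `X ∩ Z`. Unless `X ⊆ Z`, both counts are `1` if `#(X \ Z) = 1` and `0`
otherwise. -/
lemma inclusionMatrix_mul_transpose_inclusionMatrix_succ [CommRing K] (k b : ℕ) :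
    inclusionMatrix α K (k + 1) (b + 1) * (inclusionMatrix α K b (b + 1))ᵀ =
      (inclusionMatrix α K k (k + 1))ᵀ * inclusionMatrix α K k b +
        ((Fintype.card α : K) - k - b - 1) • inclusionMatrix α K (k + 1) b := by
  ext ⟨X, hX⟩ ⟨Z, hZ⟩
  simp only [mul_apply, transpose_apply, inclusionMatrix_apply, ite_zero_mul_ite_zero, mul_one,
    Matrix.add_apply, Matrix.smul_apply, smul_eq_mul]
  rw [sum_subtype_card_eq_boole (b + 1) fun Y => X ⊆ Y ∧ Z ⊆ Y,
    sum_subtype_card_eq_boole k fun T => T ⊆ X ∧ T ⊆ Z]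
  have hsup : ({Y ∈ powersetCard (b + 1) univ | X ⊆ Y ∧ Z ⊆ Y} : Finset (Finset α)) =
      {Y ∈ powersetCard (b + 1) (univ : Finset α) | X ∪ Z ⊆ Y} := by
    simp only [union_subset_iff]
  have hsub : ({T ∈ powersetCard k univ | T ⊆ X ∧ T ⊆ Z} : Finset (Finset α)) =
      powersetCard k (X ∩ Z) := by
    ext T; simp [mem_powersetCard, subset_inter_iff, and_comm]
  have hcard := card_union_add_card_inter X Z
  have hbn : b ≤ Fintype.card α := hZ ▸ card_le_univ Z
  rw [hsup, hsub, card_powersetCard]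
  by_cases hXZ : X ⊆ Z
  · rw [union_eq_right.mpr hXZ, inter_eq_left.mpr hXZ,
      card_filter_powersetCard_subset _ _ _ (subset_univ _) (by omega), card_univ, hZ, hX,
      if_pos hXZ, Nat.add_sub_cancel_left, Nat.choose_one_right, Nat.choose_succ_self_right]
    push_cast [Nat.cast_sub hbn]
    ring
  · rw [if_neg hXZ, mul_zero, add_zero]
    have hlt : #(X ∩ Z) < k + 1 :=
      (card_lt_card (Finset.ssubset_iff_subset_ne.mpr
        ⟨inter_subset_left, mt inter_eq_left.mp hXZ⟩)).trans_eq hX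
    rcases Nat.lt_succ_iff_lt_or_eq.mp hlt with h | h
    · rw [Nat.choose_eq_zero_of_lt h, filter_eq_empty_iff.mpr fun Y hY hXZY => ?_]
      · simp
      · have := card_le_card hXZY
        rw [mem_powersetCard_univ.mp hY] at this
        omega
    · rw [h, Nat.choose_self, card_filter_powersetCard_subset _ _ _ (subset_univ _) (by omega),
        show b + 1 - #(X ∪ Z) = 0 by omega, Nat.choose_zero_right]

theorem linearIndependent_row_inclusionMatrix [Field K] [CharZero K] {k b : ℕ} (hkb : k ≤ b)
    (hn : k + b ≤ Fintype.card α) : LinearIndependent K (inclusionMatrix α K k b).row := by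
  rw [← vecMul_injective_iff, ← coe_vecMulLinear, ← LinearMap.ker_eq_bot,
    LinearMap.ker_eq_bot']
  simp only [vecMulLinear_apply]
  induction k generalizing b with
  | zero =>
    intro f hf
    have : Subsingleton {X : Finset α // #X = 0} :=
      ⟨fun X X' => Subtype.ext <| by rw [card_eq_zero.mp X.2, card_eq_zero.mp X'.2]⟩
    obtain ⟨Y, -, hY⟩ := exists_subset_card_eq (s := (univ : Finset α)) (by simpa using hn)
    ext X
    simpa [vecMul, dotProduct, Fintype.sum_subsingleton _ X, card_eq_zero.mp X.2] using
      congrFun hf ⟨Y, hY⟩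
  | succ k ihk =>
    induction b with
    | zero => omega
    | succ b ihb =>
      intro f hf
      obtain hkb | hkb := (Nat.succ_le_succ_iff.mp hkb).eq_or_lt
      · subst hkb
        simpa [inclusionMatrix_self] using hf
      set g := f ᵥ* (inclusionMatrix α K k (k + 1))ᵀ
      set c : K := (Fintype.card α : K) - k - b - 1
      have hc : c ≠ 0 := by
        rw [show c = ((Fintype.card α - (k + b + 1) : ℕ) : K) by
          rw [Nat.cast_sub (by omega)]; push_cast; ring]
        exact_mod_cast (by omega : Fintype.card α - (k + b + 1) ≠ 0)
      have hcomm :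
          g ᵥ* inclusionMatrix α K k b + c • f ᵥ* inclusionMatrix α K (k + 1) b = 0 := by
        rw [vecMul_vecMul, ← vecMul_smul, ← vecMul_add,
          ← inclusionMatrix_mul_transpose_inclusionMatrix_succ, ← vecMul_vecMul, hf,
          zero_vecMul]
      clear_value g
      have hg : g = 0 := by
        refine ihk (b := b + 1) (by omega) (by omega) g ?_
        have := congrArg (· ᵥ* inclusionMatrix α K b (b + 1)) hcomm
        rw [add_vecMul, smul_vecMul, vecMul_vecMul, vecMul_vecMul,
          inclusionMatrix_mul_inclusionMatrix hkb.le, inclusionMatrix_mul_inclusionMatrix hkb,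
          vecMul_smul, vecMul_smul, hf, smul_zero, smul_zero, add_zero, zero_vecMul] at this
        exact (smul_eq_zero.mp this).resolve_left
          (Nat.cast_ne_zero.mpr (Nat.choose_pos (by omega)).ne')
      rw [hg, zero_vecMul, zero_add] at hcomm
      exact ihb (by omega) (by omega) f ((smul_eq_zero.mp hcomm).resolve_left hc)

def complCardEquiv {k : ℕ} (hk : k ≤ Fintype.card α) :
    {X : Finset α // #X = k} ≃ {X : Finset α // #X = Fintype.card α - k} :=
  (compl_involutive.toPerm _).subtypeEquiv fun X => by
    simp only [Function.Involutive.coe_toPerm, card_compl]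
    have := card_le_univ X
    omega

lemma inclusionMatrix_eq_transpose_submatrix_complCardEquiv [Zero K] [One K] {i b : ℕ}
    (hi : i ≤ Fintype.card α) (hb : b ≤ Fintype.card α) :
    inclusionMatrix α K i b =
      (inclusionMatrix α K (Fintype.card α - b) (Fintype.card α - i))ᵀ.submatrix
        (complCardEquiv hi) (complCardEquiv hb) := by
  ext X Y
  simp [complCardEquiv]

theorem rank_inclusionMatrix_of_add_le [Field K] [CharZero K] {i b : ℕ} (hib : i ≤ b)
    (h : i + b ≤ Fintype.card α) :
    (inclusionMatrix α K i b).rank = (Fintype.card α).choose i := by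
  rw [(linearIndependent_row_inclusionMatrix hib h).rank_matrix, Fintype.card_finset_len]

theorem rank_inclusionMatrix_of_le_add [Field K] [CharZero K] {i b : ℕ} (hib : i ≤ b)
    (hb : b ≤ Fintype.card α) (h : Fintype.card α ≤ i + b) :
    (inclusionMatrix α K i b).rank = (Fintype.card α).choose b := by
  rw [inclusionMatrix_eq_transpose_submatrix_complCardEquiv (hib.trans hb) hb, rank_submatrix,
    rank_transpose, rank_inclusionMatrix_of_add_le (by omega) (by omega), Nat.choose_symm hb]

/-- **Gottlieb's theorem**: for `i ≤ b ≤ v`, the inclusion matrix has full rank over a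
field of characteristic zero. -/
theorem gottlieb (v i b : ℕ) (hib : i ≤ b) (hbv : b ≤ v) :
    (inclusionMatrixQ v i b).rank = min (v.choose i) (v.choose b) := by
  change (inclusionMatrix (Fin v) ℚ i b).rank = _
  have hrows := rank_le_card_height (inclusionMatrix (Fin v) ℚ i b)
  have hcols := rank_le_card_width (inclusionMatrix (Fin v) ℚ i b)
  simp only [Fintype.card_finset_len, Fintype.card_fin] at hrows hcols
  rcases le_total (i + b) v with h | h
  · have hrank := rank_inclusionMatrix_of_add_le (α := Fin v) (K := ℚ) hib (by simpa using h)
    rw [Fintype.card_fin] at hrank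
    omega
  · have hrank := rank_inclusionMatrix_of_le_add (α := Fin v) (K := ℚ) hib (by simpa using hbv)
      (by simpa using h)
    rw [Fintype.card_fin] at hrank
    omega
end

section
/- Let p be a prime, k = 𝔽_p, and let u be a p-ary t-design of block size b on a set of size v, with coefficient μ_t. If j ≤ t and C(b-j, t-j) ≢ 0 (mod p), then u is also a j-design with coefficient μ_j = (C(v-j, t-j) / C(b-j, t-j)) · μ_t, where the division is carried out in 𝔽_p. -/
/-!
Double counting the pairs `(Z, Y)` with `W ⊆ Z ⊆ Y`, `#Z = t` and `#Y = b`, weighted by `u Y`: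
summing over `Z` first gives `C(v - j, t - j) μₜ` by the `t`-design property, summing over `Y`
first gives `C(b - j, t - j)` times the `j`-sum at `W`.
-/

open Finset

variable {α R : Type*} [Fintype α] [DecidableEq α]

def IsDesign [AddCommMonoid R] (u : Finset α → R) (t b : ℕ) (μ : R) : Prop :=
  ∀ Z : Finset α, #Z = t → ∑ Y with Z ⊆ Y ∧ #Y = b, u Y = μ

theorem IsDesign.choose_mul_sum_eq [CommSemiring R] {u : Finset α → R} {t b : ℕ} {μ : R}
    (hu : IsDesign u t b μ) {W : Finset α} (hWt : #W ≤ t) :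
    ((b - #W).choose (t - #W) : R) * ∑ Y with W ⊆ Y ∧ #Y = b, u Y
      = ((Fintype.card α - #W).choose (t - #W) : R) * μ :=
  calc ((b - #W).choose (t - #W) : R) * ∑ Y with W ⊆ Y ∧ #Y = b, u Y
      = ∑ Y with W ⊆ Y ∧ #Y = b, ∑ Z ∈ (Y.powersetCard t).filter (W ⊆ ·), u Y := by
        rw [mul_sum]
        refine sum_congr rfl fun Y hY => ?_
        obtain ⟨hWY, hYb⟩ := (mem_filter.mp hY).2
        rw [sum_const, card_filter_powersetCard_subset W Y t hWY hWt, hYb, nsmul_eq_mul]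
    _ = ∑ Z ∈ (univ.powersetCard t).filter (W ⊆ ·), ∑ Y with Z ⊆ Y ∧ #Y = b, u Y := by
        refine sum_comm' fun Y Z => ?_
        simp only [mem_filter, mem_powersetCard, mem_univ, subset_univ, true_and]
        exact ⟨fun ⟨⟨_, hYb⟩, ⟨hZY, hZt⟩, hWZ⟩ => ⟨⟨hZY, hYb⟩, hZt, hWZ⟩,
          fun ⟨⟨hZY, hYb⟩, hZt, hWZ⟩ => ⟨⟨hWZ.trans hZY, hYb⟩, ⟨hZY, hZt⟩, hWZ⟩⟩
    _ = ((Fintype.card α - #W).choose (t - #W) : R) * μ := by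
        rw [sum_congr rfl fun Z hZ => hu Z (mem_powersetCard.mp (mem_filter.mp hZ).1).2,
          sum_const, card_filter_powersetCard_subset W univ t (subset_univ W) hWt, card_univ,
          nsmul_eq_mul]

theorem IsDesign.of_le [Field R] {u : Finset α → R} {t b j : ℕ} {μ : R}
    (hu : IsDesign u t b μ) (hjt : j ≤ t) (hnz : ((b - j).choose (t - j) : R) ≠ 0) :
    IsDesign u j b
      (((Fintype.card α - j).choose (t - j) : R) / ((b - j).choose (t - j) : R) * μ) := by
  rintro W rfl
  rw [div_mul_eq_mul_div, eq_div_iff hnz, mul_comm, hu.choose_mul_sum_eq hjt]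

theorem pary_design_coefficient_general (p v b t j : ℕ) [Fact p.Prime]
    (hjt : j ≤ t)
    (u : Finset (Fin v) → ZMod p) (μt : ZMod p)
    (hu : ∀ Z : Finset (Fin v), Z.card = t →
      ∑ Y ∈ Finset.univ.filter (fun Y : Finset (Fin v) => Z ⊆ Y ∧ Y.card = b), u Y = μt)
    (hnz : (((b - j).choose (t - j) : ℕ) : ZMod p) ≠ 0) :
    ∀ W : Finset (Fin v), W.card = j →
      ∑ Y ∈ Finset.univ.filter (fun Y : Finset (Fin v) => W ⊆ Y ∧ Y.card = b), u Y =
        (((v - j).choose (t - j) : ℕ) : ZMod p) / (((b - j).choose (t - j) : ℕ) : ZMod p) * μt := by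
  simpa only [IsDesign, Fintype.card_fin] using IsDesign.of_le hu hjt hnz

/-- A `p`-ary `t`-design of block size `b` on `[v]` with coefficient `μt` is also a
`j`-design with coefficient `C(v-j, t-j)/C(b-j, t-j) · μt` whenever
`C(b-j, t-j) ≢ 0 (mod p)`. -/
theorem pary_design_coefficient (p v b t j : ℕ) [Fact p.Prime]
    (htb : t ≤ b) (hbv : b ≤ v) (hjt : j ≤ t)
    (u : Finset (Fin v) → ZMod p) (μt : ZMod p)
    (hu : ∀ Z : Finset (Fin v), Z.card = t →
      ∑ Y ∈ Finset.univ.filter (fun Y : Finset (Fin v) => Z ⊆ Y ∧ Y.card = b), u Y = μt)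
    (hnz : (((b - j).choose (t - j) : ℕ) : ZMod p) ≠ 0) :
    ∀ W : Finset (Fin v), W.card = j →
      ∑ Y ∈ Finset.univ.filter (fun Y : Finset (Fin v) => W ⊆ Y ∧ Y.card = b), u Y =
        (((v - j).choose (t - j) : ℕ) : ZMod p) / (((b - j).choose (t - j) : ℕ) : ZMod p) * μt :=
  pary_design_coefficient_general p v b t j hjt u μt hu hnz
end

section
/- Let X, Y be disjoint b-subsets of [v], f : X → Y a bijection, and define u on b-subsets of [v] by u(Z) = (-1)^{|Z ∩ Y|} if Z ⊆ X ∪ Y and for all x ∈ X, x ∈ Z implies f(x) ∉ Z, and u(Z) = 0 otherwise. Then u is a null p-ary design for (v-b, b): for every j < b and every j-subset W of [v], Σ_{Z ⊇ W, |Z| = b} u(Z) = 0 in 𝔽_p. -/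
/-! Since `|W| < b` and the `b` pairs `{x, f x}` are disjoint, some pair `{x₀, f x₀}` misses `W`.
A pair-free `b`-subset of `X ∪ Y` meets each of the `b` pairs at most once, hence exactly once.
So `Z ↦ Z ∆ {x₀, f x₀}` is an involution of the pair-free `b`-sets containing `W` which changes
`|Z ∩ Y|` by one, and the terms of the sum cancel in pairs. -/

open Finset
open scoped symmDiff

namespace Finset

variable {α : Type*} [DecidableEq α]

theorem card_symmDiff_add_two_mul_card_inter (s t : Finset α) :
    #(s ∆ t) + 2 * #(s ∩ t) = #s + #t := by
  have hunion : s ∆ t ∪ s ∩ t = s ∪ t := symmDiff_sup_inf s t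
  have hdisj : Disjoint (s ∆ t) (s ∩ t) := disjoint_symmDiff_inf s t
  rw [← card_union_add_card_inter, ← hunion, card_union_of_disjoint hdisj]
  ring

theorem neg_one_pow_card_symmDiff {R : Type*} [Monoid R] [HasDistribNeg R] (s t : Finset α) :
    (-1 : R) ^ #(s ∆ t) = (-1) ^ #s * (-1) ^ #t := by
  rw [← pow_add, ← card_symmDiff_add_two_mul_card_inter, pow_add, pow_mul, neg_one_sq, one_pow,
    mul_one]

end Finset

section PairFree

variable {α : Type*} [DecidableEq α] {X Y : Finset α} (f : X ≃ Y)

def PairFree (Z : Finset α) : Prop :=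
  Z ⊆ X ∪ Y ∧ ∀ x (hx : x ∈ X), x ∈ Z → (f ⟨x, hx⟩ : α) ∉ Z

instance : DecidablePred (PairFree f) := fun _ => inferInstanceAs (Decidable (_ ∧ _))

def pairRep (z : α) : α :=
  if h : z ∈ Y then f.symm ⟨z, h⟩ else z

variable {f}

theorem pairRep_mem {z : α} (hz : z ∈ X ∪ Y) : pairRep f z ∈ X := by
  unfold pairRep
  split_ifs with hzY
  · exact (f.symm _).2
  · exact (mem_union.1 hz).resolve_right hzY

theorem pairRep_eq_iff (hXY : Disjoint X Y) {z x : α} (hx : x ∈ X) :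
    pairRep f z = x ↔ z = x ∨ z = f ⟨x, hx⟩ := by
  unfold pairRep
  split_ifs with hzY
  · have hzx : z ≠ x := by rintro rfl; exact disjoint_left.1 hXY hx hzY
    rw [← Subtype.ext_iff (a2 := ⟨x, hx⟩), Equiv.symm_apply_eq, Subtype.ext_iff]
    simp [hzx]
  · have hzfx : z ≠ f ⟨x, hx⟩ := by rintro rfl; exact hzY (f _).2
    simp [hzfx]

theorem card_le_of_forall_pair_meets (hXY : Disjoint X Y) {W : Finset α}
    (hW : ∀ x (hx : x ∈ X), x ∈ W ∨ (f ⟨x, hx⟩ : α) ∈ W) : #X ≤ #W :=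
  calc #X ≤ #(W.image (pairRep f)) := card_le_card fun x hx => by
        obtain ⟨z, hzW, hz⟩ : ∃ z ∈ W, z = x ∨ z = f ⟨x, hx⟩ := by
          rcases hW x hx with h | h
          exacts [⟨x, h, .inl rfl⟩, ⟨_, h, .inr rfl⟩]
        exact mem_image.2 ⟨z, hzW, (pairRep_eq_iff hXY hx).2 hz⟩
    _ ≤ #W := card_image_le

theorem exists_pair_disjoint_of_card_lt (hXY : Disjoint X Y) {W : Finset α} (hW : #W < #X) :
    ∃ x, ∃ hx : x ∈ X, x ∉ W ∧ (f ⟨x, hx⟩ : α) ∉ W := by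
  by_contra! h
  exact hW.not_ge (card_le_of_forall_pair_meets hXY fun x hx => or_iff_not_imp_left.2 (h x hx))

namespace PairFree

variable {Z : Finset α}

theorem injOn_pairRep (hXY : Disjoint X Y) (hZ : PairFree f Z) :
    Set.InjOn (pairRep f) Z := by
  intro z₁ hz₁ z₂ hz₂ h
  have hx := pairRep_mem (f := f) (hZ.1 hz₁)
  have h₁ := (pairRep_eq_iff hXY hx).1 rfl
  have h₂ := (pairRep_eq_iff hXY hx).1 h.symm
  have hpair := hZ.2 _ hx
  rcases h₁ with h₁ | h₁ <;> rcases h₂ with h₂ | h₂ <;> grind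

theorem mem_or_mem (hXY : Disjoint X Y) (hZ : PairFree f Z) (hcard : #X ≤ #Z)
    {x : α} (hx : x ∈ X) : x ∈ Z ∨ (f ⟨x, hx⟩ : α) ∈ Z := by
  by_contra! h
  have hsub : Z.image (pairRep f) ⊆ X.erase x := fun y hy => by
    obtain ⟨z, hz, rfl⟩ := mem_image.1 hy
    refine mem_erase.2 ⟨fun hzx => ?_, pairRep_mem (hZ.1 hz)⟩
    rcases (pairRep_eq_iff hXY hx).1 hzx with rfl | rfl
    exacts [h.1 hz, h.2 hz]
  have := card_le_card hsub
  rw [card_image_of_injOn (hZ.injOn_pairRep hXY), card_erase_of_mem hx] at this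
  have : 0 < #X := card_pos.2 ⟨x, hx⟩
  omega

theorem card_symmDiff_pair (hXY : Disjoint X Y) (hZ : PairFree f Z) (hcard : #X ≤ #Z)
    {x : α} (hx : x ∈ X) : #(Z ∆ {x, (f ⟨x, hx⟩ : α)}) = #Z := by
  have hne : x ≠ f ⟨x, hx⟩ := fun h => disjoint_left.1 hXY hx (h ▸ (f _).2)
  have hinter : #(Z ∩ {x, (f ⟨x, hx⟩ : α)}) = 1 := by
    rcases hZ.mem_or_mem hXY hcard hx with h | h
    · rw [inter_insert_of_mem h, inter_singleton_of_notMem (hZ.2 x hx h), insert_empty,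
        card_singleton]
    · rw [inter_insert_of_notMem fun h' => hZ.2 x hx h' h, inter_singleton_of_mem h,
        card_singleton]
  have := card_symmDiff_add_two_mul_card_inter Z {x, (f ⟨x, hx⟩ : α)}
  rw [hinter, card_pair hne] at this
  omega

theorem symmDiff_pair (hXY : Disjoint X Y) (hZ : PairFree f Z) (hcard : #X ≤ #Z)
    {x : α} (hx : x ∈ X) : PairFree f (Z ∆ {x, (f ⟨x, hx⟩ : α)}) := by
  refine ⟨symmDiff_subset_union.trans (union_subset hZ.1 ?_), fun x' hx' h₁ h₂ => ?_⟩
  · exact insert_subset_iff.2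
      ⟨mem_union_left _ hx, singleton_subset_iff.2 (mem_union_right _ (f _).2)⟩
  have hcover := hZ.mem_or_mem hXY hcard hx
  have hpair := hZ.2 x' hx'
  have hfx' : (f ⟨x', hx'⟩ : α) ≠ x := fun h => disjoint_left.1 hXY hx (h ▸ (f _).2)
  have hx'fx : x' ≠ f ⟨x, hx⟩ := fun h => disjoint_left.1 hXY hx' (h ▸ (f _).2)
  have hinj : x' ≠ x → (f ⟨x', hx'⟩ : α) ≠ f ⟨x, hx⟩ := fun h h' =>
    h (congrArg Subtype.val (f.injective (Subtype.ext h')))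
  simp only [mem_symmDiff, mem_insert, mem_singleton] at h₁ h₂
  grind

end PairFree

theorem neg_one_pow_card_symmDiff_pair_inter {R : Type*} [Monoid R] [HasDistribNeg R]
    (hXY : Disjoint X Y) {x : α} (hx : x ∈ X) (Z : Finset α) :
    (-1 : R) ^ #((Z ∆ {x, (f ⟨x, hx⟩ : α)}) ∩ Y) = -(-1) ^ #(Z ∩ Y) := by
  have hpair : ({x, (f ⟨x, hx⟩ : α)} : Finset α) ∩ Y = {(f ⟨x, hx⟩ : α)} := by
    rw [insert_inter_of_notMem (disjoint_left.1 hXY hx), singleton_inter_of_mem (f _).2]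
  have hdistrib : (Z ∆ {x, (f ⟨x, hx⟩ : α)}) ∩ Y = (Z ∩ Y) ∆ ({x, (f ⟨x, hx⟩ : α)} ∩ Y) :=
    inf_symmDiff_distrib_right _ _ _
  rw [hdistrib, hpair, neg_one_pow_card_symmDiff, card_singleton, pow_one, mul_neg_one]

theorem sum_neg_one_pow_card_inter_pairFree_eq_zero [Fintype α] {R : Type*} [Ring R]
    (hXY : Disjoint X Y) {W : Finset α} (hW : #W < #X) :
    ∑ Z ∈ {Z : Finset α | W ⊆ Z ∧ #Z = #X} with PairFree f Z, (-1 : R) ^ #(Z ∩ Y) = 0 := by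
  obtain ⟨x, hx, hxW, hfxW⟩ := exists_pair_disjoint_of_card_lt hXY hW
  refine sum_involution (fun Z _ => Z ∆ {x, (f ⟨x, hx⟩ : α)}) (fun Z _ => ?_)
    (fun Z _ _ => ?_) (fun Z hZ => ?_) (fun Z _ => symmDiff_symmDiff_cancel_right _ _)
  · rw [neg_one_pow_card_symmDiff_pair_inter hXY hx, add_neg_cancel]
  · rw [Ne, symmDiff_eq_left]
    exact insert_ne_empty _ _
  · simp only [mem_filter, mem_univ, true_and] at hZ ⊢
    obtain ⟨⟨hWZ, hZX⟩, hZ⟩ := hZ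
    refine ⟨⟨fun w hw => mem_symmDiff.2 (.inl ⟨hWZ hw, ?_⟩), ?_⟩, hZ.symmDiff_pair hXY hZX.ge hx⟩
    · simp only [mem_insert, mem_singleton]
      rintro (rfl | rfl) <;> contradiction
    · rw [hZ.card_symmDiff_pair hXY hZX.ge hx, hZX]

end PairFree

theorem james_null_design_general (p v b : ℕ)
    (X Y : Finset (Fin v)) (hX : X.card = b) (hXY : Disjoint X Y)
    (f : {x // x ∈ X} ≃ {y // y ∈ Y})
    (u : Finset (Fin v) → ZMod p)
    (hu1 : ∀ Z : Finset (Fin v),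
      (Z ⊆ X ∪ Y ∧ ∀ x (hx : x ∈ X), x ∈ Z → ((f ⟨x, hx⟩ : {y // y ∈ Y}) : Fin v) ∉ Z) →
        u Z = (-1) ^ (Z ∩ Y).card)
    (hu2 : ∀ Z : Finset (Fin v),
      ¬(Z ⊆ X ∪ Y ∧ ∀ x (hx : x ∈ X), x ∈ Z → ((f ⟨x, hx⟩ : {y // y ∈ Y}) : Fin v) ∉ Z) →
        u Z = 0) :
    ∀ j < b, ∀ W : Finset (Fin v), W.card = j →
      ∑ Z ∈ Finset.univ.filter (fun Z : Finset (Fin v) => W ⊆ Z ∧ Z.card = b), u Z = 0 := by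
  rintro j hj W rfl
  subst hX
  have hu : ∀ Z, u Z = if PairFree f Z then (-1) ^ #(Z ∩ Y) else 0 := fun Z => by
    split_ifs with h
    exacts [hu1 Z h, hu2 Z h]
  rw [sum_congr rfl fun Z _ => hu Z, ← sum_filter]
  exact sum_neg_one_pow_card_inter_pairFree_eq_zero hXY hj

/-- **James' construction of null designs**: given disjoint `b`-subsets `X, Y` of `[v]`
and a bijection `f : X → Y`, the function `u` with `u Z = (-1)^{|Z ∩ Y|}` when
`Z ⊆ X ∪ Y` and no element of `X` lies in `Z` together with its image, and `u Z = 0`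
otherwise, is a null `p`-ary design for `(v-b, b)`. -/
theorem james_null_design (p v b : ℕ) [Fact p.Prime] (hbv : 2 * b ≤ v)
    (X Y : Finset (Fin v)) (hX : X.card = b) (hY : Y.card = b) (hXY : Disjoint X Y)
    (f : {x // x ∈ X} ≃ {y // y ∈ Y})
    (u : Finset (Fin v) → ZMod p)
    (hu1 : ∀ Z : Finset (Fin v),
      (Z ⊆ X ∪ Y ∧ ∀ x (hx : x ∈ X), x ∈ Z → ((f ⟨x, hx⟩ : {y // y ∈ Y}) : Fin v) ∉ Z) →
        u Z = (-1) ^ (Z ∩ Y).card)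
    (hu2 : ∀ Z : Finset (Fin v),
      ¬(Z ⊆ X ∪ Y ∧ ∀ x (hx : x ∈ X), x ∈ Z → ((f ⟨x, hx⟩ : {y // y ∈ Y}) : Fin v) ∉ Z) →
        u Z = 0) :
    ∀ j < b, ∀ W : Finset (Fin v), W.card = j →
      ∑ Z ∈ Finset.univ.filter (fun Z : Finset (Fin v) => W ⊆ Z ∧ Z.card = b), u Z = 0 :=
  james_null_design_general p v b X Y hX hXY f u hu1 hu2
end

section
/- Let p be a prime and t ≤ b ≤ v - t. Suppose that for all i ≤ t, whenever C(b-i, t-i) ≡ 0 (mod p) also C(v-i, t-i) ≡ 0 (mod p). Then, assuming Wilson's existence theorem, deduce: for a ≥ b with v = a + b and l ≤ l_p(b), if the l-th base-p digit of a is not p-1, then for every j ≤ b - p^l with the l-th base-p digit of b - j equal to 0, C(a + b - j, a + p^l) ≡ 0 (mod p). -/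
/-- The key binomial computation: if the `l`-th base-`p` digit of `a` is not `p - 1`,
then for every `j ≤ b - p^l` whose difference `b - j` has vanishing `l`-th base-`p`
digit, `p` divides `C(a + b - j, a + p^l)`. -/
theorem carry_forces_divisibility (p a b l : ℕ) (hp : p.Prime) (hb : 1 ≤ b) (hba : b ≤ a)
    (hl : l ≤ Nat.log p b) (hdigit : a / p ^ l % p ≠ p - 1) :
    ∀ j ≤ b - p ^ l, (b - j) / p ^ l % p = 0 → p ∣ (a + b - j).choose (a + p ^ l) := by
  intro j hj hzero
  have hp1 : 1 < p := hp.one_lt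
  set P := p ^ l with hP
  obtain ⟨Q, hQ⟩ : ∃ Q, Q = p ^ (l + 1) := ⟨_, rfl⟩
  have hPQ : Q = P * p := by rw [hQ, hP, pow_succ]
  have hP0 : 0 < P := Nat.pow_pos hp.pos
  have hPltQ : P < Q := by
    rw [hPQ]; exact lt_mul_of_one_lt_right hP0 hp1
  have hPb : P ≤ b := le_trans (Nat.pow_le_pow_right hp.pos hl) (Nat.pow_log_le_self p (by omega))
  set c := b - j with hc
  have hPc : P ≤ c := by omega
  -- base-p digit facts
  have hamod : a % Q = a % P + P * (a / P % p) := by rw [hPQ]; exact Nat.mod_mul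
  have hcmod : c % Q = c % P := by rw [hPQ, Nat.mod_mul, hzero]; ring
  have haP : a % P < P := Nat.mod_lt _ hP0
  have hcP : c % P < P := Nat.mod_lt _ hP0
  have hdig : a / P % p < p - 1 := by
    have := Nat.mod_lt (a / P) hp.pos
    omega
  -- hence a % Q + P < Q
  have hkey : a % Q + P < Q := by
    rw [hPQ]
    calc a % (P * p) + P = a % P + P * (a / P % p) + P := by rw [← hPQ, hamod]
    _ < P + P * (p - 2) + P := by
        have h1 : a / P % p ≤ p - 2 := by omega
        have := Nat.mul_le_mul_left P h1
        omega
    _ ≤ P * p := by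
        have h2 : P * (p - 2) + P * 2 = P * p := by
          rw [← Nat.mul_add]; congr 1; omega
        omega
  -- k % Q = a % Q + P
  have hk : (a + P) % Q = a % Q + P := by
    rw [Nat.add_mod, Nat.mod_eq_of_lt hPltQ, Nat.mod_eq_of_lt]
    have := Nat.mod_lt a (show 0 < Q by omega)
    omega
  -- c ≥ Q
  have hcQ : Q ≤ c := by
    by_contra h
    rw [Nat.mod_eq_of_lt (by omega)] at hcmod
    omega
  -- m % Q ≥ Q - P where m = c - P
  have hm : Q - P ≤ (c - P) % Q := by
    set s := (c - P) % Q with hs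
    have hsQ : s < Q := Nat.mod_lt _ (by omega)
    have h1 : (s + P) % Q = c % P := by
      have h2 : (c - P) + P = c := by omega
      calc (s + P) % Q = ((c - P) % Q + P % Q) % Q := by rw [hs, Nat.mod_eq_of_lt hPltQ]
      _ = ((c - P) + P) % Q := (Nat.add_mod _ _ _).symm
      _ = c % P := by rw [h2, hcmod]
    rcases lt_or_ge (s + P) Q with h | h
    · rw [Nat.mod_eq_of_lt h] at h1; omega
    · have h3 : s + P - Q < Q := by omega
      rw [Nat.mod_eq_sub_mod h, Nat.mod_eq_of_lt h3] at h1
      omega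
  -- assemble via Kummer's theorem
  have hn : a + b - j = a + c := by omega
  rw [hn]
  have hkn : a + P ≤ a + c := by omega
  by_contra hdvd
  have hz : emultiplicity p ((a + c).choose (a + P)) = 0 := emultiplicity_eq_zero.2 hdvd
  have hmult := hp.emultiplicity_choose hkn (Nat.lt_succ_of_le (le_refl (Nat.log p (a + c))))
  rw [hz] at hmult
  have hcard : (Finset.filter (fun i => p ^ i ≤ (a + P) % p ^ i + ((a + c) - (a + P)) % p ^ i)
      (Finset.Ico 1 (Nat.log p (a + c) + 1))).card = 0 := by exact_mod_cast hmult.symm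
  have hlog : l + 1 ≤ Nat.log p (a + c) := by
    calc l + 1 = Nat.log p Q := by rw [hQ, Nat.log_pow hp1]
    _ ≤ Nat.log p (a + c) := Nat.log_mono_right (by omega)
  have hmem : (l + 1) ∈ Finset.filter
      (fun i => p ^ i ≤ (a + P) % p ^ i + ((a + c) - (a + P)) % p ^ i)
      (Finset.Ico 1 (Nat.log p (a + c) + 1)) := by
    simp only [Finset.mem_filter, Finset.mem_Ico]
    refine ⟨⟨by omega, by omega⟩, ?_⟩
    have hnk : (a + c) - (a + P) = c - P := by omega
    rw [hnk, ← hQ]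
    omega
  rw [Finset.card_eq_zero] at hcard
  rw [hcard] at hmem
  exact absurd hmem (Finset.notMem_empty _)
end

section
/- Let p be a prime and a ≥ b ≥ 1. If a universal p-ary design u for (a,b) is non-null as a j-design (j < b), then for every m < l_p(b), the sum of the m-th base-p digits of b - j and of a is less than p, i.e., (b-j)_m + a_m < p. -/
open Finset

/-- Split a mod by a product: `x % (q * r) = q * (x / q % r) + x % q`. -/
lemma aux_mod_mul_split (x q r : ℕ) : x % (q * r) = q * (x / q % r) + x % q := by
  conv_lhs => rw [← Nat.div_add_mod (x % (q * r)) q]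
  rw [Nat.mod_mod_of_dvd _ (dvd_mul_right q r), Nat.mod_mul_right_div_self]

lemma aux_sub_mod_eq_of_le_mod (x t n : ℕ) (h : t ≤ x % n) : (x - t) % n = x % n - t := by
  rcases Nat.eq_zero_or_pos n with rfl | hn
  · simp
  have hx := Nat.div_add_mod x n
  have h2 : x - t = n * (x / n) + (x % n - t) := by omega
  rw [h2, Nat.mul_add_mod]
  exact Nat.mod_eq_of_lt (by have := Nat.mod_lt x hn; omega)

/-- One carry in adding `x` and `y` in base `p` implies `p ∣ (x+y).choose y`. -/
lemma aux_dvd_choose_of_carry {p : ℕ} (hp : p.Prime) (x y i : ℕ) (hi : 1 ≤ i)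
    (hc : p ^ i ≤ y % p ^ i + x % p ^ i) : p ∣ (x + y).choose y := by
  by_contra hnd
  have hb : Nat.log p (x + y) < Nat.log p (x + y) + 1 := Nat.lt_succ_self _
  have hE := Nat.Prime.emultiplicity_choose' (b := Nat.log p (x + y) + 1) hp hb
  rw [emultiplicity_eq_zero.2 hnd] at hE
  have hcard : ({i ∈ Finset.Ico 1 (Nat.log p (x + y) + 1) |
      p ^ i ≤ y % p ^ i + x % p ^ i} : Finset ℕ).card = 0 := by
    exact_mod_cast hE.symm
  rw [Finset.card_eq_zero] at hcard
  have hxy : p ^ i ≤ x + y := le_trans hc (by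
    have := Nat.mod_le y (p ^ i); have := Nat.mod_le x (p ^ i); omega)
  have hilog : i ≤ Nat.log p (x + y) := by
    rw [Nat.le_log_iff_pow_le hp.one_lt
      (by have h1 : 0 < p ^ i := pow_pos hp.pos i; omega)]
    exact hxy
  have : i ∈ ({i ∈ Finset.Ico 1 (Nat.log p (x + y) + 1) |
      p ^ i ≤ y % p ^ i + x % p ^ i} : Finset ℕ) := by
    simp only [Finset.mem_filter, Finset.mem_Ico]
    exact ⟨⟨hi, by omega⟩, hc⟩
  simp [hcard] at this

/-- No carries in adding `x` and `y` in base `p` implies `¬ p ∣ (x+y).choose y`. -/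
lemma aux_not_dvd_choose_of_no_carry {p : ℕ} (hp : p.Prime) (x y : ℕ)
    (hc : ∀ i, 1 ≤ i → y % p ^ i + x % p ^ i < p ^ i) : ¬ p ∣ (x + y).choose y := by
  have hb : Nat.log p (x + y) < Nat.log p (x + y) + 1 := Nat.lt_succ_self _
  have hE := Nat.Prime.emultiplicity_choose' (b := Nat.log p (x + y) + 1) hp hb
  rw [← emultiplicity_eq_zero, hE]
  have : ({i ∈ Finset.Ico 1 (Nat.log p (x + y) + 1) |
      p ^ i ≤ y % p ^ i + x % p ^ i} : Finset ℕ) = ∅ := by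
    rw [Finset.filter_eq_empty_iff]
    intro i hi
    rw [Finset.mem_Ico] at hi
    exact not_le.2 (hc i hi.1)
  simp [this]

/-- No carries in the low `m` digits gives a bound on sums of mods. -/
lemma aux_digitsum_lt {p : ℕ} (hp : 1 < p) (x y : ℕ) :
    ∀ m : ℕ, (∀ i, i < m → x / p ^ i % p + y / p ^ i % p < p) →
      x % p ^ m + y % p ^ m < p ^ m := by
  intro m
  induction m with
  | zero => intro _; simp [Nat.mod_one]
  | succ n ihn =>
    intro h
    have h1 := ihn (fun i hi => h i (by omega))
    have hx : x % p ^ (n + 1) = p ^ n * (x / p ^ n % p) + x % p ^ n := by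
      rw [pow_succ]; exact aux_mod_mul_split x (p ^ n) p
    have hy : y % p ^ (n + 1) = p ^ n * (y / p ^ n % p) + y % p ^ n := by
      rw [pow_succ]; exact aux_mod_mul_split y (p ^ n) p
    have hd := h n (Nat.lt_succ_self n)
    have hmm : p ^ n * (x / p ^ n % p) + p ^ n * (y / p ^ n % p) ≤ p ^ n * (p - 1) := by
      rw [← Nat.mul_add]
      exact Nat.mul_le_mul le_rfl (by omega)
    have hps : p ^ n * (p - 1) + p ^ n = p ^ n * p := by
      rw [← Nat.mul_succ]; congr 1; omega
    have hps2 : p ^ (n + 1) = p ^ n * p := pow_succ p n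
    omega

lemma aux_card_sandwich {α : Type*} [DecidableEq α] (Z Y : Finset α) (hZY : Z ⊆ Y) (k : ℕ)
    (hk : Z.card ≤ k) :
    (Y.powerset.filter (fun W => Z ⊆ W ∧ W.card = k)).card
      = (Y.card - Z.card).choose (k - Z.card) := by
  rw [← Finset.card_sdiff_of_subset hZY, ← Finset.card_powersetCard]
  apply Finset.card_nbij' (fun W => W \ Z) (fun V => Z ∪ V)
  · intro W hW
    simp only [Finset.mem_coe, Finset.mem_filter, Finset.mem_powerset] at hW
    rw [Finset.mem_coe, Finset.mem_powersetCard]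
    exact ⟨Finset.sdiff_subset_sdiff hW.1 le_rfl,
      by rw [Finset.card_sdiff_of_subset hW.2.1, hW.2.2]⟩
  · intro V hV
    rw [Finset.mem_coe, Finset.mem_powersetCard] at hV
    have hdisj : Disjoint Z V :=
      Finset.disjoint_left.2 fun x hxZ hxV => ((Finset.mem_sdiff.1 (hV.1 hxV)).2 hxZ).elim
    simp only [Finset.mem_coe, Finset.mem_filter, Finset.mem_powerset]
    refine ⟨Finset.union_subset hZY (hV.1.trans Finset.sdiff_subset), Finset.subset_union_left, ?_⟩
    rw [Finset.card_union_of_disjoint hdisj, hV.2]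
    omega
  · intro W hW
    simp only [Finset.mem_coe, Finset.mem_filter, Finset.mem_powerset] at hW
    exact Finset.union_sdiff_of_subset hW.2.1
  · intro V hV
    rw [Finset.mem_coe, Finset.mem_powersetCard] at hV
    have hdisj : Disjoint Z V :=
      Finset.disjoint_left.2 fun x hxZ hxV => ((Finset.mem_sdiff.1 (hV.1 hxV)).2 hxZ).elim
    exact Finset.union_sdiff_cancel_left hdisj

lemma aux_design_relation {N : Type*} [Fintype N] [DecidableEq N] {p : ℕ} (b : ℕ)
    (u : Finset N → ZMod p) (μ : ℕ → ZMod p)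
    (hu : ∀ j < b, ∀ Z : Finset N, Z.card = j →
      ∑ Y ∈ Finset.univ.filter (fun Y : Finset N => Z ⊆ Y ∧ Y.card = b), u Y = μ j)
    (i k : ℕ) (hik : i ≤ k) (hkb : k < b) (hiN : i ≤ Fintype.card N) :
    ((Fintype.card N - i).choose (k - i) : ZMod p) * μ k
      = ((b - i).choose (k - i) : ZMod p) * μ i := by
  obtain ⟨Z, -, hZc⟩ := Finset.exists_subset_card_eq
    (show i ≤ (Finset.univ : Finset N).card by simpa using hiN)
  set S := Finset.univ.filter (fun W : Finset N => Z ⊆ W ∧ W.card = k) with hS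
  have hScard : S.card = (Fintype.card N - i).choose (k - i) := by
    have h1 : S = Finset.univ.powerset.filter (fun W : Finset N => Z ⊆ W ∧ W.card = k) := by
      rw [Finset.powerset_univ]
    rw [h1, aux_card_sandwich Z Finset.univ (Finset.subset_univ Z) k (by omega),
      Finset.card_univ, hZc]
  have h1 : ∑ W ∈ S, ∑ Y ∈ Finset.univ.filter (fun Y : Finset N => W ⊆ Y ∧ Y.card = b), u Y
      = S.card • μ k := by
    rw [← Finset.sum_const]
    refine Finset.sum_congr rfl fun W hW => ?_
    rw [hS, Finset.mem_filter] at hW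
    exact hu k hkb W hW.2.2
  have h2 : ∑ W ∈ S, ∑ Y ∈ Finset.univ.filter (fun Y : Finset N => W ⊆ Y ∧ Y.card = b), u Y
      = ∑ Y ∈ Finset.univ, ∑ W ∈ Finset.univ,
          if (Z ⊆ W ∧ W.card = k) ∧ (W ⊆ Y ∧ Y.card = b) then u Y else 0 := by
    rw [Finset.sum_comm]
    rw [hS, Finset.sum_filter]
    refine Finset.sum_congr rfl fun W _ => ?_
    rw [Finset.sum_filter]
    split_ifs with h
    · exact Finset.sum_congr rfl fun Y _ => by simp [h]
    · exact (Finset.sum_eq_zero fun Y _ => by simp [h]).symm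
  have h3 : ∀ Y : Finset N, (∑ W ∈ Finset.univ,
        if (Z ⊆ W ∧ W.card = k) ∧ (W ⊆ Y ∧ Y.card = b) then u Y else 0)
      = (if Z ⊆ Y ∧ Y.card = b then ((b - i).choose (k - i) : ℕ) else 0) • u Y := by
    intro Y
    rw [← Finset.sum_filter, Finset.sum_const]
    congr 1
    split_ifs with hY
    · have he : Finset.univ.filter
          (fun W : Finset N => (Z ⊆ W ∧ W.card = k) ∧ (W ⊆ Y ∧ Y.card = b))
          = Y.powerset.filter (fun W => Z ⊆ W ∧ W.card = k) := by
        ext W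
        simp only [Finset.mem_filter, Finset.mem_powerset, Finset.mem_univ, true_and]
        tauto
      rw [he, aux_card_sandwich Z Y hY.1 k (by omega), hY.2, hZc]
    · rw [Finset.card_eq_zero, Finset.filter_eq_empty_iff]
      intro W _
      rintro ⟨⟨hZW, -⟩, hWY, hYb⟩
      exact hY ⟨hZW.trans hWY, hYb⟩
  have h4 : ∑ W ∈ S, ∑ Y ∈ Finset.univ.filter (fun Y : Finset N => W ⊆ Y ∧ Y.card = b), u Y
      = ((b - i).choose (k - i) : ℕ) • μ i := by
    rw [h2, Finset.sum_congr rfl fun Y _ => h3 Y,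
      ← hu i (lt_of_le_of_lt hik hkb) Z hZc, Finset.smul_sum, Finset.sum_filter]
    refine Finset.sum_congr rfl fun Y _ => ?_
    rw [ite_smul, zero_smul]
  rw [h1, hScard] at h4
  rw [← nsmul_eq_mul, ← nsmul_eq_mul]
  exact h4

/-- If a universal `p`-ary design for `(a,b)` is non-null as a `j`-design, then for
every `m < l_p(b)` the `m`-th base-`p` digits of `b - j` and of `a` sum to less than `p`. -/
theorem nonnull_digit_condition (p a b : ℕ) (hp : p.Prime) (hb : 1 ≤ b) (hba : b ≤ a)
    (u : Finset (Fin (a + b)) → ZMod p) (μ : ℕ → ZMod p)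
    (hu : ∀ j < b, ∀ Z : Finset (Fin (a + b)), Z.card = j →
      ∑ Y ∈ Finset.univ.filter (fun Y : Finset (Fin (a + b)) => Z ⊆ Y ∧ Y.card = b), u Y = μ j)
    (j : ℕ) (hj : j < b) (hnonnull : μ j ≠ 0) :
    ∀ m < Nat.log p b, (b - j) / p ^ m % p + a / p ^ m % p < p := by
  haveI := Fact.mk hp
  have hdvd0 : ∀ n : ℕ, (n : ZMod p) = 0 ↔ p ∣ n :=
    fun n => ZMod.natCast_eq_zero_iff n p
  -- the two contradiction steps from the design relations
  have stepA : ∀ t, t < b - j → p ∣ (a + (b - j)).choose t → ¬ p ∣ (b - j).choose t → False := by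
    intro t ht hd hnd
    have hrel := aux_design_relation b u μ hu j (j + t) (Nat.le_add_right j t)
      (by omega) (by simp only [Fintype.card_fin]; omega)
    rw [Fintype.card_fin] at hrel
    have e1 : a + b - j = a + (b - j) := by omega
    have e2 : j + t - j = t := by omega
    rw [e1, e2] at hrel
    rw [(hdvd0 _).2 hd, zero_mul] at hrel
    rcases mul_eq_zero.1 hrel.symm with h | h
    · exact hnd ((hdvd0 _).1 h)
    · exact hnonnull h
  have stepB : ∀ s, s ≤ j → p ∣ ((b - j) + s).choose s →
      ¬ p ∣ (a + (b - j) + s).choose s → False := by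
    intro s hs hd hnd
    have hrel := aux_design_relation b u μ hu (j - s) j (by omega) hj
      (by simp only [Fintype.card_fin]; omega)
    rw [Fintype.card_fin] at hrel
    have e1 : a + b - (j - s) = a + (b - j) + s := by omega
    have e2 : j - (j - s) = s := by omega
    have e3 : b - (j - s) = (b - j) + s := by omega
    rw [e1, e2, e3] at hrel
    rw [(hdvd0 _).2 hd, zero_mul] at hrel
    rcases mul_eq_zero.1 hrel with h | h
    · exact hnd ((hdvd0 _).1 h)
    · exact hnonnull h
  intro m
  induction m using Nat.strong_induction_on with
  | _ m IH =>
  intro hm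
  by_contra hcon
  push_neg at hcon
  set c := b - j with hc
  set Q := p ^ m with hQdef
  set P1 := p ^ (m + 1) with hP1def
  set cm := c / Q % p with hcmdef
  set am := a / Q % p with hamdef
  set β := c % Q with hβdef
  set α := a % Q with hαdef
  have hp1 : 1 < p := hp.one_lt
  have hQpos : 0 < Q := pow_pos hp.pos m
  have hP1pos : 0 < P1 := pow_pos hp.pos (m + 1)
  have hP1Q : P1 = Q * p := pow_succ p m
  have hcmod : c % P1 = Q * cm + β := by rw [hP1Q]; exact aux_mod_mul_split c Q p
  have hamod : a % P1 = Q * am + α := by rw [hP1Q]; exact aux_mod_mul_split a Q p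
  have hβ : β < Q := Nat.mod_lt c hQpos
  have hα : α < Q := Nat.mod_lt a hQpos
  have hcmlt : cm < p := Nat.mod_lt _ hp.pos
  have hamlt : am < p := Nat.mod_lt _ hp.pos
  have hbP1 : P1 ≤ b := by
    rw [hP1def]; exact Nat.pow_le_of_le_log (by omega) (by omega)
  clear_value α β am cm P1 Q c
  have hcm1 : 1 ≤ cm := by omega
  have ham1 : 1 ≤ am := by omega
  have hc1 : 1 ≤ c := by omega
  have hcP1lt : c % P1 < P1 := Nat.mod_lt c hP1pos
  have haP1lt : a % P1 < P1 := Nat.mod_lt a hP1pos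
  have hcP1le : c % P1 ≤ c := Nat.mod_le c P1
  have hmul : Q * p ≤ Q * cm + Q * am := by
    have h := Nat.mul_le_mul (le_refl Q) hcon
    rw [Nat.mul_add] at h
    exact h
  have hQcm : Q ≤ Q * cm := by
    calc Q = Q * 1 := (mul_one Q).symm
    _ ≤ Q * cm := Nat.mul_le_mul le_rfl hcm1
  have hQltP1 : Q < P1 := by
    rw [hP1Q]
    exact (lt_mul_iff_one_lt_right hQpos).2 hp1
  have hQsub : Q * (p - 1) + Q = Q * p := by rw [← Nat.mul_succ]; congr 1; omega
  have hcQ : Q ≤ c := by omega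
  by_cases hA : am + 1 < p
  · -- Case A : the m-th digit of a is not p-1; use upward relation with t = c - Q
    have htc : c - Q < c := by omega
    refine stepA (c - Q) htc ?_ ?_
    · -- p ∣ (a + c).choose (c - Q)
      have hEq : a + c = a + Q + (c - Q) := by omega
      have H := aux_dvd_choose_of_carry hp (a + Q) (c - Q) (m + 1) (by omega) ?_
      · rwa [← hEq] at H
      rw [← hP1def]
      have ht1 : (c - Q) % P1 = c % P1 - Q := aux_sub_mod_eq_of_le_mod c Q P1 (by omega)
      have hd1 : Q * (am + 1) = Q * am + Q := by ring
      have hd2 : Q * (am + 1) ≤ Q * (p - 1) := Nat.mul_le_mul le_rfl (by omega)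
      have ht2 : (a + Q) % P1 = Q * am + α + Q := by
        rw [Nat.add_mod, Nat.mod_eq_of_lt hQltP1, hamod, Nat.mod_eq_of_lt (by omega)]
      omega
    · -- ¬ p ∣ c.choose (c - Q)
      have hEq : c = Q + (c - Q) := by omega
      have H := aux_not_dvd_choose_of_no_carry hp Q (c - Q) ?_
      · rwa [← hEq] at H
      intro i hi
      rcases le_or_gt i m with hle | hlt
      · have hz : Q % p ^ i = 0 := by
          rw [hQdef]; exact Nat.mod_eq_zero_of_dvd (pow_dvd_pow p hle)
        have := Nat.mod_lt (c - Q) (pow_pos hp.pos i)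
        omega
      · have hdv : P1 ∣ p ^ i := by rw [hP1def]; exact pow_dvd_pow p hlt
        have h1 : c % p ^ i % P1 = c % P1 := Nat.mod_mod_of_dvd c hdv
        have h2 : c % p ^ i % P1 ≤ c % p ^ i := Nat.mod_le _ _
        have h3 : (c - Q) % p ^ i = c % p ^ i - Q :=
          aux_sub_mod_eq_of_le_mod c Q (p ^ i) (by omega)
        have h4 : Q % p ^ i = Q :=
          Nat.mod_eq_of_lt (lt_of_lt_of_le hQltP1
            (Nat.le_of_dvd (pow_pos hp.pos i) hdv))
        have h5 : c % p ^ i < p ^ i := Nat.mod_lt c (pow_pos hp.pos i)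
        omega
  · -- now the m-th digit of a is p - 1
    have ham_eq : am = p - 1 := by omega
    have hQam : Q * am + Q = Q * p := by rw [ham_eq]; exact hQsub
    by_cases hB : P1 ≤ c
    · -- Case B : c ≥ p^(m+1); use t = c % P1
      have htlt : c % P1 < c := by omega
      have hP1dvd : P1 ∣ c - c % P1 := ⟨c / P1, by have := Nat.div_add_mod c P1; omega⟩
      refine stepA (c % P1) htlt ?_ ?_
      · have hEq : a + c = c - c % P1 + a + c % P1 := by omega
        have H := aux_dvd_choose_of_carry hp (c - c % P1 + a) (c % P1) (m + 1) (by omega) ?_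
        · rwa [← hEq] at H
        rw [← hP1def]
        have h6 : (c - c % P1 + a) % P1 = a % P1 := by
          rw [Nat.add_mod, Nat.mod_eq_zero_of_dvd hP1dvd, zero_add, Nat.mod_mod]
        have h7 : c % P1 % P1 = c % P1 := Nat.mod_mod_of_dvd c dvd_rfl
        omega
      · have hEq : c = c - c % P1 + c % P1 := by omega
        have H := aux_not_dvd_choose_of_no_carry hp (c - c % P1) (c % P1) ?_
        · rwa [← hEq] at H
        intro i hi
        rcases le_or_gt i (m + 1) with hle | hlt
        · have hz : (c - c % P1) % p ^ i = 0 := by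
            refine Nat.mod_eq_zero_of_dvd (dvd_trans ?_ hP1dvd)
            rw [hP1def]; exact pow_dvd_pow p hle
          have := Nat.mod_lt (c % P1) (pow_pos hp.pos i)
          omega
        · have hdv : P1 ∣ p ^ i := by rw [hP1def]; exact pow_dvd_pow p (by omega)
          have h1 : c % p ^ i % P1 = c % P1 := Nat.mod_mod_of_dvd c hdv
          have h2 : c % p ^ i % P1 ≤ c % p ^ i := Nat.mod_le _ _
          have h3 : (c - c % P1) % p ^ i = c % p ^ i - c % P1 :=
            aux_sub_mod_eq_of_le_mod c (c % P1) (p ^ i) (by omega)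
          have h4 : c % P1 % p ^ i = c % P1 :=
            Nat.mod_eq_of_lt (lt_of_lt_of_le hcP1lt
              (Nat.le_of_dvd (pow_pos hp.pos i) hdv))
          have h5 : c % p ^ i < p ^ i := Nat.mod_lt c (pow_pos hp.pos i)
          omega
    · push_neg at hB
      have hceq : c % P1 = c := Nat.mod_eq_of_lt hB
      -- minimality: no carries below m
      have hαβ : α + β < Q := by
        have h := aux_digitsum_lt hp1 a c m (fun i hi => by
          have := IH i (by omega) (by omega)
          omega)
        rw [← hQdef] at h
        omega
      by_cases hC : 0 < β
      · -- Case C : c < p^(m+1), β > 0 ; use t = Q * cm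
        have htlt : Q * cm < c := by omega
        refine stepA (Q * cm) htlt ?_ ?_
        · have hEq : a + c = β + a + Q * cm := by omega
          have H := aux_dvd_choose_of_carry hp (β + a) (Q * cm) (m + 1) (by omega) ?_
          · rwa [← hEq] at H
          rw [← hP1def]
          have h7 : Q * cm % P1 = Q * cm := Nat.mod_eq_of_lt (by omega)
          have h8 : (β + a) % P1 = β + (Q * am + α) := by
            rw [Nat.add_mod, Nat.mod_eq_of_lt (lt_trans hβ hQltP1), hamod,
              Nat.mod_eq_of_lt (by omega)]
          omega
        · have hEq : c = β + Q * cm := by omega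
          have H := aux_not_dvd_choose_of_no_carry hp β (Q * cm) ?_
          · rwa [← hEq] at H
          intro i hi
          rcases le_or_gt i m with hle | hlt
          · have hz : Q * cm % p ^ i = 0 := by
              refine Nat.mod_eq_zero_of_dvd (dvd_trans ?_ (dvd_mul_right Q cm))
              rw [hQdef]; exact pow_dvd_pow p hle
            have := Nat.mod_lt β (pow_pos hp.pos i)
            omega
          · have hP1le : P1 ≤ p ^ i := by
              rw [hP1def]; exact Nat.pow_le_pow_right hp.pos (by omega)
            have h1 : Q * cm % p ^ i = Q * cm := Nat.mod_eq_of_lt (by omega)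
            have h2 : β % p ^ i = β := Nat.mod_eq_of_lt (by omega)
            omega
      · -- Case D : c < p^(m+1), β = 0, so c = Q * cm ; use downward relation
        have hβ0 : β = 0 := by omega
        have hcval : c = Q * cm := by omega
        have hsle : P1 - c ≤ j := by omega
        have hsltP1 : P1 - c < P1 := by omega
        refine stepB (P1 - c) hsle ?_ ?_
        · refine aux_dvd_choose_of_carry hp c (P1 - c) (m + 1) (by omega) ?_
          rw [← hP1def]
          have h1 : (P1 - c) % P1 = P1 - c := Nat.mod_eq_of_lt hsltP1
          omega
        · refine aux_not_dvd_choose_of_no_carry hp (a + c) (P1 - c) ?_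
          intro i hi
          have hQdvds : Q ∣ P1 - c := by
            refine Nat.dvd_sub ?_ ?_
            · rw [hP1Q]; exact dvd_mul_right Q p
            · rw [hcval]; exact dvd_mul_right Q cm
          have hsplitcm : Q * (cm - 1) + Q = Q * cm := by rw [← Nat.mul_succ]; congr 1; omega
          have hxmod : (a + c) % P1 = Q * (cm - 1) + α := by
            rw [Nat.add_mod, hamod, hceq]
            have hv : Q * am + α + c = Q * p + (Q * (cm - 1) + α) := by omega
            rw [hv, ← hP1Q, Nat.add_mod_left]
            exact Nat.mod_eq_of_lt (by omega)
          rcases le_or_gt i m with hle | hlt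
          · have hz : (P1 - c) % p ^ i = 0 := by
              refine Nat.mod_eq_zero_of_dvd (dvd_trans ?_ hQdvds)
              rw [hQdef]; exact pow_dvd_pow p hle
            have := Nat.mod_lt (a + c) (pow_pos hp.pos i)
            omega
          · -- i ≥ m + 1
            have hP1le : P1 ≤ p ^ i := by
              rw [hP1def]; exact Nat.pow_le_pow_right hp.pos (by omega)
            have hpi : p ^ i = P1 * p ^ (i - m - 1) := by
              rw [hP1def, ← pow_add]; congr 1; omega
            have hsplit2 : (a + c) % p ^ i
                = P1 * ((a + c) / P1 % p ^ (i - m - 1)) + (a + c) % P1 := by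
              rw [hpi]; exact aux_mod_mul_split (a + c) P1 (p ^ (i - m - 1))
            have hKlt : (a + c) / P1 % p ^ (i - m - 1) < p ^ (i - m - 1) :=
              Nat.mod_lt _ (pow_pos hp.pos _)
            have hKb : P1 * ((a + c) / P1 % p ^ (i - m - 1)) + P1 ≤ p ^ i := by
              rw [hpi, ← Nat.mul_succ]
              exact Nat.mul_le_mul le_rfl (by omega)
            have hs : (P1 - c) % p ^ i = P1 - c := Nat.mod_eq_of_lt (by omega)
            omega
end

section
/- Let p be a prime and (a,b) a James partition, i.e., a ≥ b ≥ 1 and val_p(a+1) > l_p(b). Write b = α p^β + b̂ with β = l_p(b) and b̂ < p^β. Let X = { j < b : (b-j)_m + a_m < p for all m < l_p(b) }. Then X = { b̂, p^β + b̂, 2p^β + b̂, ..., (α-1)p^β + b̂ }, and X is connected under the comparability relation i ~ j iff i ≠ j and C(b - min(i,j), |i - j|) ≢ 0 (mod p). -/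
/-- If `p^(β+1) ∣ a+1` then all base-`p` digits of `a` in positions `m ≤ β` are `p-1`. -/
private lemma james_digit_all9 {p a β m : ℕ} (hp : 2 ≤ p) (hdvd : p ^ (β + 1) ∣ a + 1)
    (hm : m ≤ β) : a / p ^ m % p = p - 1 := by
  obtain ⟨c, hc⟩ := hdvd
  have hpm : 0 < p ^ m := pow_pos (by omega) m
  have hsplit : p ^ (β + 1) = p ^ m * (p * p ^ (β - m)) := by
    rw [← pow_succ', ← pow_add]
    congr 1
    omega
  have hc1 : 1 ≤ p ^ (β - m) * c := by
    rcases Nat.eq_zero_or_pos c with h | h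
    · subst h; simp at hc
    · exact Nat.one_le_iff_ne_zero.mpr (Nat.mul_ne_zero (pow_pos (by omega) _).ne' h.ne')
  obtain ⟨e, he⟩ : ∃ e, p ^ (β - m) * c = e + 1 := ⟨p ^ (β - m) * c - 1, by omega⟩
  have key : a = p ^ m * (p * e + (p - 1)) + (p ^ m - 1) := by
    have h1 : a + 1 = p ^ m * (p * (e + 1)) := by
      rw [hc, hsplit, mul_assoc, mul_assoc, ← he]
    have h2 : p * (e + 1) = p * e + p := by ring
    rw [h2] at h1
    have h3 : p ^ m * (p * e + p) = p ^ m * (p * e + (p - 1)) + p ^ m := by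
      have h4 : p * e + p = (p * e + (p - 1)) + 1 := by omega
      rw [h4]; ring
    omega
  rw [key, Nat.mul_add_div hpm, Nat.div_eq_of_lt (by omega), Nat.add_zero,
    Nat.mul_add_mod]
  exact Nat.mod_eq_of_lt (by omega)

/-- If all digits below `β` vanish then `p^β` divides. -/
private lemma pow_dvd_of_digits_zero {p n : ℕ} (hp : 2 ≤ p) :
    ∀ β, (∀ m < β, n / p ^ m % p = 0) → p ^ β ∣ n := by
  intro β
  induction β with
  | zero => simp
  | succ β ih =>
    intro h
    obtain ⟨u, hu⟩ := ih (fun m hm => h m (by omega))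
    have hd : n / p ^ β % p = 0 := h β (by omega)
    have hpb : 0 < p ^ β := pow_pos (by omega) β
    rw [hu, Nat.mul_div_cancel_left _ hpb] at hd
    obtain ⟨v, hv⟩ := Nat.dvd_of_mod_eq_zero hd
    exact ⟨v, by rw [hu, hv, pow_succ]; ring⟩

/-- If `p^β ∣ n` then digits of `n` below position `β` vanish. -/
private lemma digit_zero_of_pow_dvd {p n β m : ℕ} (hp : 2 ≤ p) (h : p ^ β ∣ n) (hm : m < β) :
    n / p ^ m % p = 0 := by
  obtain ⟨u, rfl⟩ := h
  have hpm : 0 < p ^ m := pow_pos (by omega) m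
  have h1 : p ^ β = p ^ m * (p * p ^ (β - m - 1)) := by
    rw [← pow_succ', ← pow_add]
    congr 1
    omega
  rw [h1, mul_assoc, Nat.mul_div_cancel_left _ hpm, mul_assoc, Nat.mul_mod_right]

/-- Lucas: `p ∤ C(t·p^β, p^β)` for `1 ≤ t < p`. -/
private lemma not_dvd_choose_pow {p : ℕ} (hp : p.Prime) :
    ∀ β t, 1 ≤ t → t < p → ¬ p ∣ (t * p ^ β).choose (p ^ β) := by
  haveI : Fact p.Prime := ⟨hp⟩
  intro β
  induction β with
  | zero =>
    intro t ht0 htp h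
    rw [pow_zero, mul_one, Nat.choose_one_right] at h
    exact absurd (Nat.le_of_dvd ht0 h) (not_le.mpr htp)
  | succ β ih =>
    intro t ht0 htp hdvd
    have key : (t * p ^ (β + 1)).choose (p ^ (β + 1)) ≡
        (t * p ^ (β + 1) % p).choose (p ^ (β + 1) % p) *
        ((t * p ^ (β + 1) / p).choose (p ^ (β + 1) / p)) [MOD p] :=
      Choose.choose_modEq_choose_mod_mul_choose_div_nat
    have h1 : t * p ^ (β + 1) % p = 0 := by
      rw [pow_succ, ← mul_assoc]; exact Nat.mul_mod_left _ p
    have h2 : p ^ (β + 1) % p = 0 := by rw [pow_succ]; exact Nat.mul_mod_left _ p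
    have h3 : t * p ^ (β + 1) / p = t * p ^ β := by
      rw [pow_succ, ← mul_assoc]; exact Nat.mul_div_cancel _ hp.pos
    have h4 : p ^ (β + 1) / p = p ^ β := by rw [pow_succ]; exact Nat.mul_div_cancel _ hp.pos
    rw [h1, h2, h3, h4, Nat.choose_self, one_mul] at key
    exact ih t ht0 htp ((Nat.modEq_zero_iff_dvd).mp
      (key.symm.trans ((Nat.modEq_zero_iff_dvd).mpr hdvd)))

/-- For a James partition `(a,b)` with `b = α p^β + b̂`, `β = l_p(b)`, `b̂ < p^β`, the set
`X = { j < b : (b-j)_m + a_m < p for all m < l_p(b) }` equals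
`{ b̂, p^β + b̂, …, (α-1)p^β + b̂ }` and is connected under the comparability relation
`i ~ j ↔ i ≠ j ∧ C(b - min i j, |i - j|) ≢ 0 (mod p)`. -/
theorem james_single_component (p a b α bhat : ℕ) (hp : p.Prime) (hb : 1 ≤ b) (hba : b ≤ a)
    (hjames : Nat.log p b < padicValNat p (a + 1))
    (hdecomp : b = α * p ^ Nat.log p b + bhat) (hbhat : bhat < p ^ Nat.log p b) :
    (({j | j < b ∧ ∀ m < Nat.log p b, (b - j) / p ^ m % p + a / p ^ m % p < p} : Set ℕ) =
      {j | ∃ k < α, j = k * p ^ Nat.log p b + bhat}) ∧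
    (∀ i ∈ ({j | j < b ∧ ∀ m < Nat.log p b, (b - j) / p ^ m % p + a / p ^ m % p < p} : Set ℕ),
     ∀ j ∈ ({j | j < b ∧ ∀ m < Nat.log p b, (b - j) / p ^ m % p + a / p ^ m % p < p} : Set ℕ),
      Relation.ReflTransGen (fun x y =>
        x ∈ ({j | j < b ∧ ∀ m < Nat.log p b, (b - j) / p ^ m % p + a / p ^ m % p < p} : Set ℕ) ∧
        y ∈ ({j | j < b ∧ ∀ m < Nat.log p b, (b - j) / p ^ m % p + a / p ^ m % p < p} : Set ℕ) ∧
        x ≠ y ∧ ¬ p ∣ (b - min x y).choose (max x y - min x y)) i j) := by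
  have hp2 : 2 ≤ p := hp.two_le
  set β := Nat.log p b with hβ
  set q := p ^ β with hqdef
  have hq : 0 < q := pow_pos hp.pos β
  have hbq : q ≤ b := Nat.pow_log_le_self p (by omega)
  have hblt : b < q * p := by
    have := Nat.lt_pow_succ_log_self hp.one_lt b
    rwa [pow_succ] at this
  have hα1 : 1 ≤ α := by
    rcases Nat.eq_zero_or_pos α with h | h
    · subst h; simp at hdecomp; omega
    · exact h
  have hαp : α < p := by
    have h1 : q * α < q * p := by
      have hc : α * q = q * α := mul_comm _ _
      omega
    exact Nat.lt_of_mul_lt_mul_left h1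
  have hdvd : p ^ (β + 1) ∣ a + 1 :=
    dvd_trans (pow_dvd_pow p (show β + 1 ≤ padicValNat p (a + 1) by omega)) pow_padicValNat_dvd
  have hadig : ∀ m ≤ β, a / p ^ m % p = p - 1 := fun m hm => james_digit_all9 hp2 hdvd hm
  -- key subtraction identity
  have hsub : ∀ k ≤ α, b - (k * q + bhat) = (α - k) * q := by
    intro k hk
    have hs : (α - k) * q + k * q = α * q := by
      rw [← Nat.add_mul]
      congr 1
      omega
    omega
  -- membership characterization
  have hmem : ∀ j, (j < b ∧ ∀ m < β, (b - j) / p ^ m % p + a / p ^ m % p < p) ↔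
      (∃ k < α, j = k * q + bhat) := by
    intro j
    constructor
    · rintro ⟨hj, hdig⟩
      have hz : ∀ m < β, (b - j) / p ^ m % p = 0 := by
        intro m hm
        have h1 := hdig m hm
        have h2 := hadig m (le_of_lt hm)
        omega
      obtain ⟨t, ht⟩ := pow_dvd_of_digits_zero hp2 β hz
      rw [← hqdef] at ht
      have ht1 : 1 ≤ t := by
        by_contra h
        have : t = 0 := by omega
        subst this
        simp at ht
        omega
      have htα : t ≤ α := by
        by_contra h
        push_neg at h
        have h1 : q * (α + 1) ≤ q * t := Nat.mul_le_mul_left q h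
        have h2 : q * (α + 1) = α * q + q := by ring
        omega
      refine ⟨α - t, by omega, ?_⟩
      have hs : (α - t) * q + t * q = α * q := by
        rw [← Nat.add_mul]
        congr 1
        omega
      have hc : q * t = t * q := mul_comm _ _
      omega
    · rintro ⟨k, hk, rfl⟩
      have hlt : k * q + bhat < b := by
        have h1 : k * q + q ≤ α * q := by
          have := Nat.mul_le_mul_right q (show k + 1 ≤ α by omega)
          rwa [Nat.add_mul, one_mul] at this
        omega
      refine ⟨hlt, fun m hm => ?_⟩
      have hdvd' : p ^ β ∣ b - (k * q + bhat) := by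
        rw [hsub k (le_of_lt hk), hqdef]
        exact ⟨α - k, mul_comm _ _⟩
      have h0 := digit_zero_of_pow_dvd hp2 hdvd' hm
      have h2 := hadig m (le_of_lt hm)
      omega
  constructor
  · ext j
    simp only [Set.mem_setOf_eq]
    exact hmem j
  · -- connectedness
    set X : Set ℕ := {j | j < b ∧ ∀ m < β, (b - j) / p ^ m % p + a / p ^ m % p < p} with hX
    set r : ℕ → ℕ → Prop := fun x y => x ∈ X ∧ y ∈ X ∧ x ≠ y ∧
      ¬ p ∣ (b - min x y).choose (max x y - min x y) with hr
    have hXmem : ∀ k < α, (k * q + bhat) ∈ X := fun k hk => (hmem _).mpr ⟨k, hk, rfl⟩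
    have hedge : ∀ k, k + 1 < α → r (k * q + bhat) ((k + 1) * q + bhat) := by
      intro k hk
      have hstep : (k + 1) * q = k * q + q := by ring
      have hle : k * q + bhat ≤ (k + 1) * q + bhat := by omega
      refine ⟨hXmem k (by omega), hXmem (k + 1) hk, by omega, ?_⟩
      rw [min_eq_left hle, max_eq_right hle, hsub k (by omega),
        show (k + 1) * q + bhat - (k * q + bhat) = q by omega, hqdef]
      exact not_dvd_choose_pow hp β (α - k) (by omega) (by omega)
    have hchain : ∀ k, k < α → Relation.ReflTransGen r bhat (k * q + bhat) := by
      intro k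
      induction k with
      | zero =>
        intro _
        rw [show 0 * q + bhat = bhat by ring]
      | succ k ih =>
        intro h
        exact (ih (by omega)).tail (hedge k h)
    have hsymm : Symmetric r := by
      rintro x y ⟨h1, h2, h3, h4⟩
      refine ⟨h2, h1, h3.symm, ?_⟩
      rwa [min_comm y x, max_comm y x]
    intro i hi j hj
    obtain ⟨k1, hk1, rfl⟩ := (hmem i).mp hi
    obtain ⟨k2, hk2, rfl⟩ := (hmem j).mp hj
    haveI : Std.Symm r := ⟨fun _ _ h => hsymm h⟩
    exact ((Relation.ReflTransGen.stdSymm (r := r)).symm _ _ (hchain k1 hk1)).trans (hchain k2 hk2)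
end

section
/- Let p be a prime and (a,b) a pointed partition: b = p^β + b̂ with b̂ < p^{val_p(a+1)} < p^β. Let X = { j < b : (b-j)_m + a_m < p for all m < l_p(b) }. Then b̂ ∈ X and b̂ is incomparable to every other element of X, where i, j ∈ X are comparable iff (b-i)_m ≤ (b-j)_m for all m ≤ l_p(b) or (b-j)_m ≤ (b-i)_m for all m ≤ l_p(b). -/
private lemma dvd_of_low_digits_zero (p n v : ℕ) (hp : 1 ≤ p)
    (h : ∀ m < v, n / p ^ m % p = 0) : p ^ v ∣ n := by
  induction v with
  | zero => simp
  | succ v ih =>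
    obtain ⟨k, hk⟩ := ih (fun m hm => h m (hm.trans (Nat.lt_succ_self v)))
    have hd := h v (Nat.lt_succ_self v)
    rw [hk, Nat.mul_div_cancel_left _ (pow_pos hp v)] at hd
    obtain ⟨l, hl⟩ := Nat.dvd_of_mod_eq_zero hd
    exact ⟨l, by rw [hk, hl, pow_succ]; ring⟩

private lemma digit_of_dvd_succ (p a m : ℕ) (hp : 2 ≤ p) (h : p ^ (m + 1) ∣ a + 1) :
    a / p ^ m % p = p - 1 := by
  obtain ⟨q, hq⟩ := h
  have hq1 : 1 ≤ q := by
    rcases q with _ | q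
    · simp at hq
    · omega
  have hpm : 1 ≤ p ^ m := Nat.one_le_pow _ _ (by omega)
  have e1 : p ^ (m + 1) = p ^ m * p := pow_succ p m
  have e2 : a + 1 = p ^ (m + 1) * (q - 1) + p ^ m * p := by
    calc a + 1 = p ^ (m + 1) * q := hq
      _ = p ^ (m + 1) * ((q - 1) + 1) := by rw [Nat.sub_add_cancel hq1]
      _ = p ^ (m + 1) * (q - 1) + p ^ m * p := by rw [mul_add, mul_one, e1]
  have e3 : p ^ m * (p - 1) + p ^ m = p ^ m * p := by
    have hp1 : p - 1 + 1 = p := by omega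
    calc p ^ m * (p - 1) + p ^ m = p ^ m * ((p - 1) + 1) := by ring
      _ = p ^ m * p := by rw [hp1]
  have ha : a = p ^ (m + 1) * (q - 1) + (p ^ m * (p - 1) + (p ^ m - 1)) := by omega
  rw [ha]
  have hre : p ^ (m + 1) * (q - 1) + (p ^ m * (p - 1) + (p ^ m - 1)) =
      p ^ m * (p * (q - 1) + (p - 1)) + (p ^ m - 1) := by
    rw [e1]; ring
  rw [hre, Nat.mul_add_div (by omega), Nat.div_eq_of_lt (by omega), Nat.add_zero,
    Nat.mul_add_mod, Nat.mod_eq_of_lt (by omega)]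

/-- For a pointed partition `(a,b)`, `b = p^β + b̂` with `b̂ < p^{val_p(a+1)} < p^β`, the
element `b̂` lies in `X = { j < b : (b-j)_m + a_m < p for all m < l_p(b) }` and is
incomparable to every other element of `X`, where `i, j` are comparable iff the digits
of `b - i` are pointwise at most those of `b - j` (up to position `l_p(b)`) or vice versa. -/
theorem pointed_isolated_point (p a b bhat : ℕ) (hp : p.Prime) (hb : 1 ≤ b) (hba : b ≤ a)
    (hdecomp : b = p ^ Nat.log p b + bhat)
    (h1 : bhat < p ^ padicValNat p (a + 1))
    (h2 : p ^ padicValNat p (a + 1) < p ^ Nat.log p b) :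
    bhat ∈ ({j | j < b ∧ ∀ m < Nat.log p b, (b - j) / p ^ m % p + a / p ^ m % p < p} : Set ℕ) ∧
    ∀ j ∈ ({j | j < b ∧ ∀ m < Nat.log p b, (b - j) / p ^ m % p + a / p ^ m % p < p} : Set ℕ),
      j ≠ bhat →
      ¬((∀ m ≤ Nat.log p b, (b - bhat) / p ^ m % p ≤ (b - j) / p ^ m % p) ∨
        (∀ m ≤ Nat.log p b, (b - j) / p ^ m % p ≤ (b - bhat) / p ^ m % p)) := by
  set β := Nat.log p b with hβ
  set v := padicValNat p (a + 1) with hv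
  have hp2 : 2 ≤ p := hp.two_le
  have hvβ : v < β := by
    by_contra h
    exact absurd h2 (not_lt.mpr (Nat.pow_le_pow_right (by omega) (not_lt.mp h)))
  -- b - bhat = p ^ β
  have hbb : b - bhat = p ^ β := by omega
  -- digits of p^β below β are 0
  have hdig0 : ∀ m < β, p ^ β / p ^ m % p = 0 := by
    intro m hm
    have : p ^ β = p ^ m * (p * p ^ (β - m - 1)) := by
      rw [← pow_succ']; rw [← pow_add]; congr 1; omega
    rw [this, Nat.mul_div_cancel_left _ (pow_pos (by omega) m),
      Nat.mul_mod_right]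
  have hdigβ : p ^ β / p ^ β % p = 1 := by
    rw [Nat.div_self (pow_pos (by omega) β), Nat.mod_eq_of_lt (by omega)]
  -- a's digits below v are p - 1
  have hadig : ∀ m < v, a / p ^ m % p = p - 1 := by
    intro m hm
    exact digit_of_dvd_succ p a m hp2
      ((pow_dvd_pow p (by omega)).trans (pow_padicValNat_dvd))
  have hbhat_lt : bhat < b := by
    have : 1 ≤ p ^ β := Nat.one_le_pow _ _ (by omega)
    omega
  constructor
  · refine ⟨hbhat_lt, fun m hm => ?_⟩
    rw [hbb, hdig0 m hm]
    have := Nat.mod_lt (a / p ^ m) (show 0 < p by omega)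
    omega
  · rintro j ⟨hjb, hjX⟩ hjne hcomp
    -- p ^ v divides b - j
    have hdvd : p ^ v ∣ b - j := by
      apply dvd_of_low_digits_zero p (b - j) v (by omega)
      intro m hm
      have := hjX m (by omega)
      rw [hadig m hm] at this
      omega
    -- j > bhat
    have hjgt : bhat < j := by
      rcases Nat.lt_or_ge bhat j with h | h
      · exact h
      · exfalso
        have hdvd2 : p ^ v ∣ b - bhat := by
          rw [hbb]; exact pow_dvd_pow p (by omega)
        have hdvd3 : p ^ v ∣ bhat - j := by
          have : bhat - j = (b - j) - (b - bhat) := by omega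
          rw [this]
          exact Nat.dvd_sub hdvd hdvd2
        have hne : bhat - j ≠ 0 := by omega
        have := Nat.le_of_dvd (by omega) hdvd3
        omega
    -- digit β of b - j is 0
    have hbjβ : (b - j) / p ^ β % p = 0 := by
      have : b - j < p ^ β := by omega
      rw [Nat.div_eq_of_lt this, Nat.zero_mod]
    rcases hcomp with h | h
    · have := h β (le_refl β)
      rw [hbb, hdigβ, hbjβ] at this
      omega
    · -- all digits of b - j up to β are 0, so p^(β+1) ∣ b - j, but 0 < b - j < p^(β+1)
      have hzero : ∀ m < β + 1, (b - j) / p ^ m % p = 0 := by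
        intro m hm
        rcases Nat.lt_or_ge m β with hm' | hm'
        · have := h m (by omega)
          rw [hbb, hdig0 m hm'] at this
          omega
        · have : m = β := by omega
          rw [this]; exact hbjβ
      have hdvd' : p ^ (β + 1) ∣ b - j :=
        dvd_of_low_digits_zero p (b - j) (β + 1) (by omega) hzero
      have hlt : b - j < p ^ (β + 1) := by
        have e : p ^ (β + 1) = p * p ^ β := by rw [pow_succ]; ring
        have : 2 * p ^ β ≤ p * p ^ β := Nat.mul_le_mul_right _ hp2
        omega
      have hz : b - j = 0 := by
        rcases Nat.eq_zero_or_pos (b - j) with h0 | h0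
        · exact h0
        · exact absurd (Nat.le_of_dvd h0 hdvd') (by omega)
      omega
end

section
/- Let p be a prime, β ≥ 1, b = p^β, and a ≥ b with val_p(a+1) < β. Set m = a - b + 1 and v = a + b. Define u on b-subsets Y of [v] by u(Y) = 1 if Y ∩ {1,...,m} = ∅ and u(Y) = 0 otherwise. Then u is a universal p-ary design for (a, b): for every j with 0 < j < b, the sums Σ_{Y ⊇ Z} u(Y) over b-subsets Y containing a fixed j-subset Z are ≡ 0 (mod p) for all Z, while for j = 0 the total sum Σ_Y u(Y) = C(v - m, b) ≢ 0 (mod p). -/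
open Finset

private lemma count_supersets {n : ℕ} (M Z : Finset (Fin n)) (hZM : Disjoint Z M)
    (k : ℕ) (hk : Z.card ≤ k) :
    (Finset.univ.filter
        (fun Y : Finset (Fin n) => Z ⊆ Y ∧ Y.card = k ∧ Disjoint Y M)).card
      = ((Mᶜ \ Z).card).choose (k - Z.card) := by
  rw [← Finset.card_powersetCard]
  apply Finset.card_nbij' (fun Y => Y \ Z) (fun W => W ∪ Z)
  · intro Y hY
    simp only [Finset.mem_coe, mem_filter, mem_univ, true_and] at hY
    obtain ⟨h1, h2, h3⟩ := hY
    simp only [Finset.mem_coe, Finset.mem_powersetCard]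
    constructor
    · intro x hx
      obtain ⟨hxY, hxZ⟩ := Finset.mem_sdiff.mp hx
      exact Finset.mem_sdiff.mpr
        ⟨Finset.mem_compl.mpr (fun hxM => Finset.disjoint_left.mp h3 hxY hxM), hxZ⟩
    · rw [Finset.card_sdiff_of_subset h1, h2]
  · intro W hW
    rw [Finset.mem_coe, Finset.mem_powersetCard] at hW
    obtain ⟨hsub, hcard⟩ := hW
    have hWZ : Disjoint W Z :=
      Finset.disjoint_left.mpr fun x hx => (Finset.mem_sdiff.mp (hsub hx)).2
    have hWM : Disjoint W M := Finset.disjoint_left.mpr fun x hx hxM =>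
      (Finset.mem_compl.mp (Finset.mem_sdiff.mp (hsub hx)).1) hxM
    simp only [Finset.mem_coe, mem_filter, mem_univ, true_and]
    refine ⟨Finset.subset_union_right, ?_, Finset.disjoint_union_left.mpr ⟨hWM, hZM⟩⟩
    rw [Finset.card_union_of_disjoint hWZ, hcard]
    omega
  · intro Y hY
    simp only [Finset.mem_coe, mem_filter, mem_univ, true_and] at hY
    exact Finset.sdiff_union_of_subset hY.1
  · intro W hW
    rw [Finset.mem_coe, Finset.mem_powersetCard] at hW
    exact Finset.union_sdiff_cancel_right
      (Finset.disjoint_left.mpr fun x hx => (Finset.mem_sdiff.mp (hW.1 hx)).2)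

private lemma dvd_helper (p β : ℕ) (hp : p.Prime) (hβ : 1 ≤ β) (i : ℕ)
    (h1 : 1 ≤ i) (h2 : i < p ^ β) : p ∣ (p ^ β - 1 + i).choose i := by
  haveI : Fact p.Prime := ⟨hp⟩
  have hp2 := hp.two_le
  have hpow : 1 ≤ p ^ β := Nat.one_le_pow _ _ hp.pos
  have hmul : 2 * p ^ β ≤ p ^ (β + 1) := by
    rw [pow_succ, mul_comm 2]
    exact Nat.mul_le_mul_left _ hp2
  have hlog : Nat.log p (p ^ β - 1 + i) < β + 1 :=
    Nat.log_lt_of_lt_pow (by omega) (by omega)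
  have hval : 1 ≤ padicValNat p ((p ^ β - 1 + i).choose i) := by
    rw [padicValNat_choose' hlog]
    refine Finset.card_pos.mpr ⟨β, ?_⟩
    rw [Finset.mem_filter, Finset.mem_Ico]
    refine ⟨⟨hβ, by omega⟩, ?_⟩
    rw [Nat.mod_eq_of_lt h2, Nat.mod_eq_of_lt (by omega)]
    omega
  calc p = p ^ 1 := (pow_one p).symm
  _ ∣ p ^ padicValNat p ((p ^ β - 1 + i).choose i) := pow_dvd_pow p hval
  _ ∣ (p ^ β - 1 + i).choose i := pow_padicValNat_dvd

private lemma not_dvd_helper (p β : ℕ) (hp : p.Prime) (hβ : 1 ≤ β) :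
    ¬ p ∣ (2 * p ^ β - 1).choose (p ^ β) := by
  haveI : Fact p.Prime := ⟨hp⟩
  have hp2 := hp.two_le
  have hpow : 1 ≤ p ^ β := Nat.one_le_pow _ _ hp.pos
  have hkn : p ^ β ≤ 2 * p ^ β - 1 := by omega
  have hmul : 2 * p ^ β ≤ p ^ (β + 1) := by
    rw [pow_succ, mul_comm 2]
    exact Nat.mul_le_mul_left _ hp2
  have hlog : Nat.log p (2 * p ^ β - 1) < β + 1 :=
    Nat.log_lt_of_lt_pow (by omega) (by omega)
  have hval : padicValNat p ((2 * p ^ β - 1).choose (p ^ β)) = 0 := by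
    rw [padicValNat_choose hkn hlog, Finset.card_eq_zero, Finset.filter_eq_empty_iff]
    intro i hi
    rw [Finset.mem_Ico] at hi
    have hdvd : p ^ i ∣ p ^ β := pow_dvd_pow p (by omega)
    have hpi : 1 ≤ p ^ i := Nat.one_le_pow _ _ hp.pos
    obtain ⟨c, hc⟩ := hdvd
    have h2 : p ^ β % p ^ i = 0 := by rw [hc, Nat.mul_mod_right]
    have hc1 : 1 ≤ c := Nat.pos_of_ne_zero (fun h => by rw [h, Nat.mul_zero] at hc; omega)
    have hid : p ^ i * (c - 1) + p ^ i * 1 = p ^ i * c := by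
      rw [← Nat.mul_add]
      congr 1
      omega
    have h3 : (p ^ β - 1) % p ^ i = p ^ i - 1 := by
      have heq : p ^ β - 1 = p ^ i * (c - 1) + (p ^ i - 1) := by omega
      rw [heq, Nat.mul_add_mod, Nat.mod_eq_of_lt (by omega)]
    have h4 : 2 * p ^ β - 1 - p ^ β = p ^ β - 1 := by omega
    rw [h4, h2, h3]
    omega
  intro hdvd
  have hpos : 0 < (2 * p ^ β - 1).choose (p ^ β) := Nat.choose_pos hkn
  rcases (padicValNat.eq_zero_iff).mp hval with h | h | h
  · omega
  · omega
  · exact h hdvd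

/-- For `b = p^β` and `val_p(a+1) < β`, the indicator design of the `b`-subsets of
`[a+b]` avoiding `{1,…,m}` (where `m = a - b + 1`) is a universal `p`-ary design for
`(a,b)` which is null as a `j`-design for all `0 < j < b` and non-null as a `0`-design,
with total sum `C(a + b - m, b) ≢ 0 (mod p)`. -/
theorem pointed_building_block (p a β : ℕ) (hp : p.Prime) (hβ : 1 ≤ β)
    (hba : p ^ β ≤ a) (hval : padicValNat p (a + 1) < β)
    (b m v : ℕ) (hbdef : b = p ^ β) (hmdef : m = a - b + 1) (hvdef : v = a + b)
    (M : Finset (Fin v)) (hM : M = Finset.univ.filter (fun x : Fin v => (x : ℕ) < m))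
    (u : Finset (Fin v) → ZMod p)
    (hu : ∀ Y : Finset (Fin v), u Y = if Disjoint Y M then 1 else 0) :
    (∀ j, 0 < j → j < b → ∀ Z : Finset (Fin v), Z.card = j →
      ∑ Y ∈ Finset.univ.filter (fun Y : Finset (Fin v) => Z ⊆ Y ∧ Y.card = b), u Y = 0) ∧
    (∑ Y ∈ Finset.univ.filter (fun Y : Finset (Fin v) => Y.card = b), u Y =
      (((v - m).choose b : ℕ) : ZMod p)) ∧
    (((v - m).choose b : ℕ) : ZMod p) ≠ 0 := by
  haveI : Fact p.Prime := ⟨hp⟩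
  haveI : NeZero p := ⟨hp.pos.ne'⟩
  have hp2 := hp.two_le
  have hb2 : 2 ≤ b := by
    rw [hbdef]
    calc 2 ≤ p := hp2
    _ = p ^ 1 := (pow_one p).symm
    _ ≤ p ^ β := Nat.pow_le_pow_right hp.pos hβ
  have hbale : b ≤ a := hbdef ▸ hba
  have hmv : m < v := by omega
  have hMcard : M.card = m := by
    have hMeq : M = Finset.Iio (⟨m, hmv⟩ : Fin v) := by
      ext x
      simp [hM, Fin.lt_def]
    rw [hMeq, Fin.card_Iio]
  have hMccard : Mᶜ.card = v - m := by
    rw [Finset.card_compl, hMcard, Fintype.card_fin]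
  have hvm : v - m = 2 * b - 1 := by omega
  refine ⟨?_, ?_, ?_⟩
  · intro j hj0 hjb Z hZ
    by_cases hZM : Disjoint Z M
    · have hZc : Z ⊆ Mᶜ := fun x hx =>
        Finset.mem_compl.mpr (fun hxM => Finset.disjoint_left.mp hZM hx hxM)
      have hsdc : (Mᶜ \ Z).card = v - m - j := by
        rw [Finset.card_sdiff_of_subset hZc, hMccard, hZ]
      simp only [hu]
      rw [Finset.sum_boole, Finset.filter_filter]
      have hpred : (Finset.univ.filter
            (fun Y : Finset (Fin v) => (Z ⊆ Y ∧ Y.card = b) ∧ Disjoint Y M))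
          = (Finset.univ.filter
            (fun Y : Finset (Fin v) => Z ⊆ Y ∧ Y.card = b ∧ Disjoint Y M)) := by
        apply Finset.filter_congr
        intro Y _
        tauto
      rw [hpred, count_supersets M Z hZM b (by omega), hsdc]
      have harg : v - m - j = p ^ β - 1 + (b - j) := by omega
      have harg2 : b - j = b - Z.card := by rw [hZ]
      rw [harg, ← harg2]
      have hdvd : p ∣ (p ^ β - 1 + (b - j)).choose (b - j) :=
        dvd_helper p β hp hβ (b - j) (by omega) (by omega)
      rwa [ZMod.natCast_eq_zero_iff]
    · apply Finset.sum_eq_zero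
      intro Y hY
      rw [Finset.mem_filter] at hY
      rw [hu, if_neg]
      intro h
      exact hZM (h.mono_left hY.2.1)
  · simp only [hu]
    rw [Finset.sum_boole, Finset.filter_filter]
    have hpred : (Finset.univ.filter
          (fun Y : Finset (Fin v) => Y.card = b ∧ Disjoint Y M))
        = (Finset.univ.filter
          (fun Y : Finset (Fin v) => (∅ : Finset (Fin v)) ⊆ Y ∧ Y.card = b ∧ Disjoint Y M)) := by
      apply Finset.filter_congr
      intro Y _
      simp
    rw [hpred, count_supersets M ∅ (Finset.disjoint_left.mpr (by simp)) b (by simp)]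
    simp only [Finset.card_empty, Nat.sub_zero, Finset.sdiff_empty]
    rw [hMccard]
  · have harg : v - m = 2 * p ^ β - 1 := by omega
    rw [harg, hbdef]
    intro h
    rw [ZMod.natCast_eq_zero_iff] at h
    exact not_dvd_helper p β hp hβ h
end

section
/- Let p be a prime and a ≥ b ≥ 1 with (a, b) James, i.e., val_p(a+1) > l_p(b). Let d = min over s ∈ {0,...,b-1} of val_p(C(a+b-s, a)). Then the numbers μ_s = C(a + b - s, a) / p^d for 0 ≤ s < b are all integers, they satisfy the integral design coefficient relations C(a + b - j, i - j) μ_i = C(b - j, i - j) μ_j for j ≤ i < b, and at least one μ_s is not divisible by p. -/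
lemma choose_pos_aux (a b s : ℕ) (hs : s < b) (hba : b ≤ a) :
    0 < (a + b - s).choose a :=
  Nat.choose_pos (by omega)

lemma james_identity (a b j i : ℕ) (hji : j ≤ i) (hib : i < b) (hba : b ≤ a) :
    (a + b - j).choose (i - j) * (a + b - i).choose a =
      (b - j).choose (i - j) * (a + b - j).choose a := by
  have h1 := Nat.choose_mul (n := a + b - j) (k := b - j) (s := i - j)
    (by omega)
  have e1 : (a + b - j).choose (b - j) = (a + b - j).choose a := by
    have h : b - j = (a + b - j) - a := by omega
    rw [h, Nat.choose_symm (by omega)]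
  have e2 : a + b - j - (b - j) = a := by omega
  have e3 : b - j - (i - j) = b - i := by omega
  have e4 : a + b - j - (i - j) = a + b - i := by omega
  have e5 : (a + b - i).choose (b - i) = (a + b - i).choose a := by
    have h : b - i = (a + b - i) - a := by omega
    rw [h, Nat.choose_symm (by omega)]
  rw [e1, e4, e3, e5] at h1
  simpa [mul_comm] using h1.symm

/-- For a James partition `(a,b)` and `d` the minimum over `0 ≤ s < b` of the `p`-adic
valuation of `C(a+b-s, a)`, the numbers `μ_s = C(a+b-s, a) / p^d` are integers, satisfy
the Graver–Jurkat integral design coefficient relations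
`C(a+b-j, i-j) μ_i = C(b-j, i-j) μ_j`, and some `μ_s` is not divisible by `p`. -/
theorem james_integral_design_coefficients (p a b d : ℕ) (hp : p.Prime) (hb : 1 ≤ b)
    (hba : b ≤ a) (hjames : Nat.log p b < padicValNat p (a + 1))
    (hd : d = (Finset.range b).inf' (Finset.nonempty_range_iff.mpr (Nat.one_le_iff_ne_zero.mp hb))
      (fun s => padicValNat p ((a + b - s).choose a))) :
    (∀ s < b, p ^ d ∣ (a + b - s).choose a) ∧
    (∀ j i : ℕ, j ≤ i → i < b →
      (a + b - j).choose (i - j) * ((a + b - i).choose a / p ^ d) =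
        (b - j).choose (i - j) * ((a + b - j).choose a / p ^ d)) ∧
    (∃ s < b, ¬ p ∣ ((a + b - s).choose a / p ^ d)) := by
  haveI : Fact p.Prime := ⟨hp⟩
  have hdvd : ∀ s < b, p ^ d ∣ (a + b - s).choose a := by
    intro s hs
    have hle : d ≤ padicValNat p ((a + b - s).choose a) := by
      rw [hd]
      exact Finset.inf'_le _ (Finset.mem_range.mpr hs)
    calc p ^ d ∣ p ^ padicValNat p ((a + b - s).choose a) :=
          pow_dvd_pow p hle
      _ ∣ (a + b - s).choose a :=
          pow_padicValNat_dvd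
  refine ⟨hdvd, ?_, ?_⟩
  · intro j i hji hib
    rw [← Nat.mul_div_assoc _ (hdvd i hib), ← Nat.mul_div_assoc _ (hdvd j (lt_of_le_of_lt hji hib)),
      james_identity a b j i hji hib hba]
  · obtain ⟨s, hs, hmin⟩ := Finset.exists_mem_eq_inf' (Finset.nonempty_range_iff.mpr
      (Nat.one_le_iff_ne_zero.mp hb)) (fun s => padicValNat p ((a + b - s).choose a))
    refine ⟨s, Finset.mem_range.mp hs, ?_⟩
    intro hdvd'
    have hpos : 0 < (a + b - s).choose a := choose_pos_aux a b s (Finset.mem_range.mp hs) hba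
    have hval : padicValNat p ((a + b - s).choose a) = d := by rw [hd, hmin]
    have : p ^ (d + 1) ∣ (a + b - s).choose a := by
      obtain ⟨c, hc⟩ := hdvd'
      have h1 : p ^ d ∣ (a + b - s).choose a := hdvd s (Finset.mem_range.mp hs)
      obtain ⟨m, hm⟩ := h1
      rw [Nat.div_eq_of_eq_mul_left (pow_pos hp.pos d) (by rw [hm, mul_comm])] at hc
      exact ⟨c, by rw [hm, hc, pow_succ]; ring⟩
    have hle := (padicValNat_dvd_iff_le (p := p) hpos.ne').mp this
    omega
end
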